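/- arXiv:cs/0609045 — 3 statements merged into one kernel-verified Lean document; each statement's English description precedes it below -/
import Mathlib

section
/- There is a universal constant C > 0 with the following property. Let X be a compact metric space, let 𝓕 be a compact subset of C(X), and let γ > 0 be such that L := limsup_{ε→0} H_ε(𝓕) · ε^γ satisfies L ∈ (0, ∞), where H_ε(𝓕) is the metric entropy of 𝓕 in the sup-norm metric. There exists a prediction strategy that guarantees, for every sequence of signals x₁, x₂, … ∈ X and observations y₁, y₂, … ∈ [−1, 1]: for all sufficiently large N and all F ∈ 𝓕, Σ_{n=1}^N (yₙ − μₙ)² ≤ Σ_{n=1}^N (yₙ − F(xₙ))² + C · L^{1/(γ+1)} · N^{γ/(γ+1)}. -/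
open scoped BigOperators

universe u

/-- Given a prediction strategy `σ` and sequences of signals `x` and observations `y`,
`preds σ x y n` is the prediction output on round `n`. -/
noncomputable def preds {X P : Type*} (σ : List (X × P) → X → P)
    (x : ℕ → X) (y : ℕ → P) (n : ℕ) : P :=
  σ ((List.range n).map fun i => (x i, y i)) (x n)

/-- The minimal number of points of `A` forming an `ε`-net for `A`. -/
noncomputable def coveringNumber {E : Type*} [MetricSpace E] (A : Set E) (ε : ℝ) : ℕ :=
  sInf {n : ℕ | ∃ S : Finset E, ↑S ⊆ A ∧ S.card = n ∧ ∀ a ∈ A, ∃ b ∈ S, dist a b ≤ ε}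

/-- Metric entropy: binary logarithm of the minimal size of an `ε`-net. -/
noncomputable def metricEntropy {E : Type*} [MetricSpace E] (A : Set E) (ε : ℝ) : ℝ :=
  Real.logb 2 (coveringNumber A ε)


noncomputable def clip (t : ℝ) : ℝ := max (-1) (min 1 t)

lemma clip_mem (t : ℝ) : clip t ∈ Set.Icc (-1:ℝ) 1 :=
  ⟨le_max_left _ _, max_le (by norm_num) (min_le_left _ _)⟩

lemma abs_clip_le (t : ℝ) : |clip t| ≤ 1 :=
  abs_le.2 ⟨(clip_mem t).1, (clip_mem t).2⟩

lemma clip_eq_self {t : ℝ} (h : t ∈ Set.Icc (-1:ℝ) 1) : clip t = t := by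
  unfold clip; rw [min_eq_right h.2, max_eq_right h.1]

lemma clip_lipschitz (s t : ℝ) : |clip s - clip t| ≤ |s - t| := by
  unfold clip
  calc |max (-1) (min 1 s) - max (-1) (min 1 t)|
      ≤ |min 1 s - min 1 t| := by
        simpa [max_comm] using abs_max_sub_max_le_abs (min 1 s) (min 1 t) (-1)
    _ ≤ |s - t| := by
        have h := abs_min_sub_min_le_max (1:ℝ) s 1 t
        simpa using h

lemma sq_clip_le {y t : ℝ} (hy : y ∈ Set.Icc (-1:ℝ) 1) : (y - clip t)^2 ≤ (y - t)^2 := by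
  have h1 : |y - clip t| ≤ |y - t| := by
    have := clip_lipschitz y t
    rwa [clip_eq_self hy] at this
  calc (y - clip t)^2 = |y - clip t|^2 := (sq_abs _).symm
    _ ≤ |y - t|^2 := by
        have h0 : (0:ℝ) ≤ |y - clip t| := abs_nonneg _
        exact pow_le_pow_left₀ h0 h1 2
    _ = (y - t)^2 := sq_abs _

lemma key_core {a d : ℝ} (ha1 : -2 ≤ a) (ha2 : a ≤ 2) (hd1 : -2 ≤ d) (hd2 : d ≤ 2) :
    Real.exp ((2*a*d - d^2)/32) ≤ 1 + a*d/16 := by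
  have hx1 : (2*a*d - d^2)/32 < 1 := by nlinarith [sq_nonneg d]
  have h4 : (0:ℝ) < 1 - (2*a*d - d^2)/32 := by linarith
  have h2 : Real.exp ((2*a*d - d^2)/32) ≤ 1/(1 - (2*a*d - d^2)/32) := by
    have h3 : 1 - (2*a*d - d^2)/32 ≤ Real.exp (-((2*a*d - d^2)/32)) := by
      have := Real.add_one_le_exp (-((2*a*d - d^2)/32)); linarith
    rw [Real.exp_neg] at h3
    rw [le_div_iff₀ h4]
    have hex : 0 < Real.exp ((2*a*d - d^2)/32) := Real.exp_pos _
    calc Real.exp ((2*a*d - d^2)/32) * (1 - (2*a*d - d^2)/32)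
        ≤ Real.exp ((2*a*d - d^2)/32) * (Real.exp ((2*a*d - d^2)/32))⁻¹ :=
          mul_le_mul_of_nonneg_left h3 hex.le
      _ = 1 := mul_inv_cancel₀ hex.ne'
  refine h2.trans ?_
  rw [div_le_iff₀ h4]
  have hsqa : a^2 ≤ 4 := by nlinarith
  have had : -4 ≤ a*d := by nlinarith [mul_nonneg (by linarith : (0:ℝ) ≤ 2 + a) (by linarith : (0:ℝ) ≤ 2 + d), mul_nonneg (by linarith : (0:ℝ) ≤ 2 - a) (by linarith : (0:ℝ) ≤ 2 - d)]
  have core : (0:ℝ) ≤ 16 - 2*a^2 + a*d := by linarith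
  have hfin : (0:ℝ) ≤ d^2 * (16 - 2*a^2 + a*d) := mul_nonneg (sq_nonneg d) core
  have expand2 : (1 + a*d/16)*(1-(2*a*d-d^2)/32) = 1 + d^2*(16 - 2*a^2 + a*d)/512 := by ring
  rw [expand2]
  linarith

/-- Key exp-concavity ("mixability") inequality with η = 1/32. -/
lemma key_exp {y μ v : ℝ} (hy : |y| ≤ 1) (hμ : |μ| ≤ 1) (hv : |v| ≤ 1) :
    Real.exp (-(y - v)^2/32) ≤ Real.exp (-(y - μ)^2/32) * (1 + (y - μ)*(v - μ)/16) := by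
  rw [abs_le] at hy hμ hv
  have key := key_core (a := y - μ) (d := v - μ) (by linarith [hy.1, hμ.2])
    (by linarith [hy.2, hμ.1]) (by linarith [hv.1, hμ.2]) (by linarith [hv.2, hμ.1])
  have expand : -(y - v)^2/32 = -(y - μ)^2/32 + (2*(y-μ)*(v-μ) - (v-μ)^2)/32 := by ring
  rw [expand, Real.exp_add]
  exact mul_le_mul_of_nonneg_left key (Real.exp_pos _).le


section Agg

variable {ι : Type*} (w : ι → ℝ) (v : ι → ℕ → ℝ) (y : ℕ → ℝ)

noncomputable def cumLoss (e : ι) (n : ℕ) : ℝ := ∑ i ∈ Finset.range n, (y i - v e i)^2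

noncomputable def qwt (e : ι) (n : ℕ) : ℝ := w e * Real.exp (-(cumLoss v y e n)/32)

noncomputable def Wsum (n : ℕ) : ℝ := ∑' e, qwt w v y e n

noncomputable def predAgg (n : ℕ) : ℝ := (∑' e, qwt w v y e n * v e n) / Wsum w v y n

lemma cumLoss_nonneg (e : ι) (n : ℕ) : 0 ≤ cumLoss v y e n :=
  Finset.sum_nonneg fun _ _ => sq_nonneg _

lemma qwt_pos (hw : ∀ e, 0 < w e) (e : ι) (n : ℕ) : 0 < qwt w v y e n :=
  mul_pos (hw e) (Real.exp_pos _)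

lemma qwt_le_w (hw : ∀ e, 0 < w e) (e : ι) (n : ℕ) : qwt w v y e n ≤ w e := by
  have h1 : Real.exp (-(cumLoss v y e n)/32) ≤ 1 := by
    rw [Real.exp_le_one_iff]
    have := cumLoss_nonneg v y e n
    linarith
  calc qwt w v y e n ≤ w e * 1 := mul_le_mul_of_nonneg_left h1 (hw e).le
    _ = w e := mul_one _

lemma summable_qwt (hw : ∀ e, 0 < w e) (hsw : Summable w) (n : ℕ) :
    Summable (fun e => qwt w v y e n) :=
  Summable.of_nonneg_of_le (fun e => (qwt_pos w v y hw e n).le) (qwt_le_w w v y hw · n) hsw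

lemma summable_qv (hw : ∀ e, 0 < w e) (hsw : Summable w) (hv : ∀ e n, |v e n| ≤ 1) (n : ℕ) :
    Summable (fun e => qwt w v y e n * v e n) := by
  apply Summable.of_norm_bounded hsw
  intro e
  rw [Real.norm_eq_abs, abs_mul, abs_of_pos (qwt_pos w v y hw e n)]
  calc qwt w v y e n * |v e n| ≤ w e * 1 :=
        mul_le_mul (qwt_le_w w v y hw e n) (hv e n) (abs_nonneg _) (hw e).le
    _ = w e := mul_one _

lemma Wsum_pos [Nonempty ι] (hw : ∀ e, 0 < w e) (hsw : Summable w) (n : ℕ) :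
    0 < Wsum w v y n :=
  Summable.tsum_pos (summable_qwt w v y hw hsw n) (fun e => (qwt_pos w v y hw e n).le)
    (Classical.arbitrary ι) (qwt_pos w v y hw _ n)

lemma abs_predAgg_le [Nonempty ι] (hw : ∀ e, 0 < w e) (hsw : Summable w)
    (hv : ∀ e n, |v e n| ≤ 1) (n : ℕ) : |predAgg w v y n| ≤ 1 := by
  have hWpos := Wsum_pos w v y hw hsw n
  rw [predAgg, abs_div, abs_of_pos hWpos, div_le_one hWpos]
  calc |∑' e, qwt w v y e n * v e n| ≤ ∑' e, |qwt w v y e n * v e n| := by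
        have h := (summable_qv w v y hw hsw hv n).abs
        have h2 := norm_tsum_le_tsum_norm (f := fun e => qwt w v y e n * v e n)
          (by simp only [Real.norm_eq_abs]; exact h)
        simp only [Real.norm_eq_abs] at h2
        exact h2
    _ ≤ ∑' e, qwt w v y e n := by
        apply Summable.tsum_le_tsum _ (summable_qv w v y hw hsw hv n).abs
          (summable_qwt w v y hw hsw n)
        intro e
        rw [abs_mul, abs_of_pos (qwt_pos w v y hw e n)]
        calc qwt w v y e n * |v e n| ≤ qwt w v y e n * 1 :=
              mul_le_mul_of_nonneg_left (hv e n) (qwt_pos w v y hw e n).le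
          _ = qwt w v y e n := mul_one _
    _ = Wsum w v y n := rfl

lemma cumLoss_succ (e : ι) (n : ℕ) :
    cumLoss v y e (n+1) = cumLoss v y e n + (y n - v e n)^2 :=
  Finset.sum_range_succ _ _

/-- Key exp inequality imported (proved in Part 1, placeholder reference). -/

lemma Wsum_step [Nonempty ι] (hw : ∀ e, 0 < w e) (hsw : Summable w)
    (hv : ∀ e n, |v e n| ≤ 1) (hy : ∀ n, |y n| ≤ 1) (n : ℕ) :
    Wsum w v y (n+1) ≤ Real.exp (-(y n - predAgg w v y n)^2/32) * Wsum w v y n := by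
  set K := Real.exp (-(y n - predAgg w v y n)^2/32) with hK
  set p := predAgg w v y n with hp
  have hKpos : 0 < K := Real.exp_pos _
  have hWpos := Wsum_pos w v y hw hsw n
  have hq1 : ∀ e, qwt w v y e (n+1) = qwt w v y e n * Real.exp (-(y n - v e n)^2/32) := by
    intro e
    rw [qwt, qwt, cumLoss_succ, show -(cumLoss v y e n + (y n - v e n)^2)/32
      = -(cumLoss v y e n)/32 + -(y n - v e n)^2/32 from by ring, Real.exp_add, mul_assoc]
  have hpt : ∀ e, qwt w v y e (n+1) ≤ K * qwt w v y e n
      + (K*(y n - p)/16) * (qwt w v y e n * v e n) - (K*(y n - p)*p/16) * qwt w v y e n := by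
    intro e
    rw [hq1 e]
    have hkey := key_exp (hy n) (hp ▸ abs_predAgg_le w v y hw hsw hv n) (hv e n)
    calc qwt w v y e n * Real.exp (-(y n - v e n)^2/32)
        ≤ qwt w v y e n * (K * (1 + (y n - p)*(v e n - p)/16)) :=
          mul_le_mul_of_nonneg_left hkey (qwt_pos w v y hw e n).le
      _ = K * qwt w v y e n + (K*(y n - p)/16) * (qwt w v y e n * v e n)
          - (K*(y n - p)*p/16) * qwt w v y e n := by ring
  have f1 : Summable (fun e => K * qwt w v y e n) := (summable_qwt w v y hw hsw n).mul_left K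
  have f2 : Summable (fun e => (K*(y n - p)/16) * (qwt w v y e n * v e n)) :=
    (summable_qv w v y hw hsw hv n).mul_left _
  have f3 : Summable (fun e => (K*(y n - p)*p/16) * qwt w v y e n) :=
    (summable_qwt w v y hw hsw n).mul_left _
  have hle : Wsum w v y (n+1) ≤ ∑' e, (K * qwt w v y e n
      + (K*(y n - p)/16) * (qwt w v y e n * v e n) - (K*(y n - p)*p/16) * qwt w v y e n) :=
    Summable.tsum_le_tsum hpt (summable_qwt w v y hw hsw (n+1)) ((f1.add f2).sub f3)
  have hT : (∑' e, qwt w v y e n * v e n) = p * Wsum w v y n := by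
    rw [hp, predAgg, div_mul_cancel₀]
    exact hWpos.ne'
  calc Wsum w v y (n+1) ≤ _ := hle
    _ = K * Wsum w v y n + (K*(y n - p)/16) * (p * Wsum w v y n)
        - (K*(y n - p)*p/16) * Wsum w v y n := by
      rw [Summable.tsum_sub (f1.add f2) f3, Summable.tsum_add f1 f2, tsum_mul_left, tsum_mul_left,
        tsum_mul_left, hT, Wsum]
    _ = K * Wsum w v y n := by ring

lemma Wsum_tele [Nonempty ι] (hw : ∀ e, 0 < w e) (hsw : Summable w)
    (hv : ∀ e n, |v e n| ≤ 1) (hy : ∀ n, |y n| ≤ 1) (N : ℕ) :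
    Wsum w v y N ≤
      Real.exp (-(∑ n ∈ Finset.range N, (y n - predAgg w v y n)^2)/32) * Wsum w v y 0 := by
  induction N with
  | zero => simp
  | succ N ih =>
    have step := Wsum_step w v y hw hsw hv hy N
    have hE : (0:ℝ) < Real.exp (-(y N - predAgg w v y N)^2/32) := Real.exp_pos _
    calc Wsum w v y (N+1) ≤ Real.exp (-(y N - predAgg w v y N)^2/32) * Wsum w v y N := step
      _ ≤ Real.exp (-(y N - predAgg w v y N)^2/32) *
          (Real.exp (-(∑ n ∈ Finset.range N, (y n - predAgg w v y n)^2)/32) * Wsum w v y 0) :=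
        mul_le_mul_of_nonneg_left ih hE.le
      _ = Real.exp (-(∑ n ∈ Finset.range (N+1), (y n - predAgg w v y n)^2)/32) * Wsum w v y 0 := by
        rw [show -(∑ n ∈ Finset.range (N+1), (y n - predAgg w v y n)^2)/32
          = -(y N - predAgg w v y N)^2/32
            + -(∑ n ∈ Finset.range N, (y n - predAgg w v y n)^2)/32 from by
            rw [Finset.sum_range_succ]; ring, Real.exp_add, mul_assoc]

lemma agg_regret [Nonempty ι] (hw : ∀ e, 0 < w e) (hsw : Summable w)
    (hv : ∀ e n, |v e n| ≤ 1) (hy : ∀ n, |y n| ≤ 1) (hW0 : (∑' e, w e) ≤ 1)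
    (e : ι) (N : ℕ) :
    ∑ n ∈ Finset.range N, (y n - predAgg w v y n)^2 ≤
      cumLoss v y e N + 32 * Real.log (w e)⁻¹ := by
  set S := ∑ n ∈ Finset.range N, (y n - predAgg w v y n)^2 with hS
  have h1 : qwt w v y e N ≤ Wsum w v y N :=
    Summable.le_tsum (summable_qwt w v y hw hsw N) e (fun e' _ => (qwt_pos w v y hw e' N).le)
  have h3 : Wsum w v y 0 ≤ 1 := by
    have h := Summable.tsum_le_tsum (fun e' => qwt_le_w w v y hw e' 0)
      (summable_qwt w v y hw hsw 0) hsw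
    exact h.trans hW0
  have h4 : w e * Real.exp (-(cumLoss v y e N)/32) ≤ Real.exp (-S/32) := by
    have h2 := Wsum_tele w v y hw hsw hv hy N
    calc w e * Real.exp (-(cumLoss v y e N)/32) = qwt w v y e N := rfl
      _ ≤ Wsum w v y N := h1
      _ ≤ Real.exp (-S/32) * Wsum w v y 0 := h2
      _ ≤ Real.exp (-S/32) * 1 := mul_le_mul_of_nonneg_left h3 (Real.exp_pos _).le
      _ = Real.exp (-S/32) := mul_one _
  have h5 := Real.log_le_log (mul_pos (hw e) (Real.exp_pos _)) h4
  rw [Real.log_mul (hw e).ne' (Real.exp_pos _).ne', Real.log_exp, Real.log_exp] at h5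
  have h6 : Real.log (w e)⁻¹ = - Real.log (w e) := Real.log_inv _
  linarith

end Agg

-- helper: eventually affine-in-log is below a power
lemma eventually_affine_log_le (a b c r : ℝ) (hc : 0 < c) (hr : 0 < r) :
    ∀ᶠ s : ℝ in Filter.atTop, a * Real.log s + b ≤ c * s ^ r := by
  have h1 : (fun s : ℝ => a * Real.log s) =o[Filter.atTop] fun s : ℝ => s ^ r :=
    (isLittleO_log_rpow_atTop hr).const_mul_left a
  have hg : Filter.Tendsto (fun s : ℝ => s ^ r) Filter.atTop Filter.atTop :=
    tendsto_rpow_atTop hr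
  have h2 : (fun _ : ℝ => b) =o[Filter.atTop] fun s : ℝ => s ^ r := by
    apply Asymptotics.isLittleO_const_left.2
    right
    exact Filter.tendsto_abs_atTop_atTop.comp hg
  have h3 := (h1.add h2).def (show (0:ℝ) < c from hc)
  filter_upwards [h3, Filter.eventually_ge_atTop (0:ℝ)] with s hs hs0
  have hnorm : c * ‖s ^ r‖ = c * s ^ r := by
    rw [Real.norm_eq_abs, abs_of_nonneg (Real.rpow_nonneg hs0 r)]
  calc a * Real.log s + b ≤ ‖a * Real.log s + b‖ := by
        rw [Real.norm_eq_abs]; exact le_abs_self _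
    _ ≤ c * ‖s ^ r‖ := hs
    _ = c * s ^ r := hnorm

-- helper: net realizing the covering number
lemma exists_net {E : Type*} [MetricSpace E] {A : Set E} (hA : IsCompact A)
    {ε : ℝ} (hε : 0 < ε) :
    ∃ S : Finset E, ↑S ⊆ A ∧ S.card = coveringNumber A ε ∧
      ∀ a ∈ A, ∃ b ∈ S, dist a b ≤ ε := by
  classical
  have hexists : {n : ℕ | ∃ S : Finset E, ↑S ⊆ A ∧ S.card = n ∧
      ∀ a ∈ A, ∃ b ∈ S, dist a b ≤ ε}.Nonempty := by
    obtain ⟨t, hts, htfin, hcover⟩ := finite_cover_balls_of_compact hA hε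
    refine ⟨htfin.toFinset.card, htfin.toFinset, ?_, rfl, ?_⟩
    · simpa using hts
    · intro a ha
      have := hcover ha
      simp only [Set.mem_iUnion] at this
      obtain ⟨b, hb, hab⟩ := this
      exact ⟨b, by simpa using hb, le_of_lt (by rwa [Metric.mem_ball] at hab)⟩
  have hmem := Nat.sInf_mem hexists
  obtain ⟨S, h1, h2, h3⟩ := hmem
  exact ⟨S, h1, h2, h3⟩

-- helper: entropy of the empty set is zero
lemma metricEntropy_empty {E : Type*} [MetricSpace E] (ε : ℝ) :
    metricEntropy (∅ : Set E) ε = 0 := by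
  have h : coveringNumber (∅ : Set E) ε = 0 := by
    rw [coveringNumber]
    apply Nat.sInf_eq_zero.2
    left
    exact ⟨∅, by simp⟩
  rw [metricEntropy, h]
  simp


section NetWeight

variable {Y : Type*} (S : ℕ → Finset Y)

noncomputable def netWeight (e : (k : ℕ) × {f : Y // f ∈ S k}) : ℝ :=
  (1/2:ℝ)^(e.1+1) / (S e.1).card

lemma netWeight_pos (hcard : ∀ k, 0 < (S k).card) (e : (k : ℕ) × {f : Y // f ∈ S k}) :
    0 < netWeight S e := by
  apply div_pos (by positivity)
  exact_mod_cast hcard e.1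

lemma tsum_netWeight_fiber (hcard : ∀ k, 0 < (S k).card) (k : ℕ) :
    ∑' b : {f : Y // f ∈ S k}, netWeight S ⟨k, b⟩ = (1/2:ℝ)^(k+1) := by
  rw [tsum_fintype]
  simp only [netWeight]
  rw [Finset.sum_const, Finset.card_univ, Fintype.card_coe, nsmul_eq_mul]
  rw [mul_div_cancel₀]
  exact_mod_cast (hcard k).ne'

lemma summable_netWeight (hcard : ∀ k, 0 < (S k).card) : Summable (netWeight S) := by
  apply (summable_sigma_of_nonneg (fun e => (netWeight_pos S hcard e).le)).2
  constructor
  · intro k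
    exact Summable.of_finite
  · apply Summable.congr (f := fun k : ℕ => (1/2:ℝ)^(k+1))
    · have hgeo := summable_geometric_of_lt_one (r := (1/2:ℝ)) (by norm_num) (by norm_num)
      exact (hgeo.mul_left (1/2)).congr (fun k => by rw [pow_succ]; ring)
    · intro k
      exact (tsum_netWeight_fiber S hcard k).symm

lemma tsum_netWeight_le_one (hcard : ∀ k, 0 < (S k).card) :
    ∑' e, netWeight S e ≤ 1 := by
  rw [Summable.tsum_sigma (summable_netWeight S hcard)]
  have h1 : ∀ k : ℕ, (∑' b : {f : Y // f ∈ S k}, netWeight S ⟨k, b⟩) = (1/2:ℝ)^(k+1) :=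
    tsum_netWeight_fiber S hcard
  rw [tsum_congr h1]
  have h2 : ∑' k : ℕ, ((1/2:ℝ)^(k+1)) = (1/2) * ∑' k : ℕ, ((1/2:ℝ)^k) := by
    rw [← tsum_mul_left]
    exact tsum_congr fun k => by ring
  rw [h2, tsum_geometric_of_lt_one (by norm_num) (by norm_num)]
  norm_num

lemma log_inv_netWeight (hcard : ∀ k, 0 < (S k).card) (e : (k : ℕ) × {f : Y // f ∈ S k}) :
    Real.log (netWeight S e)⁻¹ = (e.1+1) * Real.log 2 + Real.log ((S e.1).card) := by
  have hc : (0:ℝ) < ((S e.1).card : ℝ) := by exact_mod_cast hcard e.1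
  rw [netWeight, inv_div, Real.log_div hc.ne' (by positivity)]
  rw [Real.log_pow]
  have : Real.log ((1:ℝ)/2) = -Real.log 2 := by
    rw [one_div, Real.log_inv]
  rw [this]
  push_cast
  ring

end NetWeight


section MainProof

-- extra small lemmas
lemma list_range_map_sum (n : ℕ) (g : ℕ → ℝ) :
    ((List.range n).map g).sum = ∑ i ∈ Finset.range n, g i := by
  induction n with
  | zero => simp
  | succ n ih =>
    rw [Finset.sum_range_succ, List.range_succ, List.map_append, List.sum_append, ih]; simp

lemma loss_compare {y c c' ε : ℝ} (hy : |y| ≤ 1) (hc : |c| ≤ 1) (hc' : |c'| ≤ 1)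
    (hd : |c - c'| ≤ ε) : (y - c)^2 ≤ (y - c')^2 + 4*ε := by
  have hid : (y - c)^2 = (y - c')^2 + (c' - c)*(2*y - c - c') := by ring
  have h1 : |2*y - c - c'| ≤ 4 := by
    rw [abs_le] at hy hc hc' ⊢
    constructor <;> (first | linarith [hy.1, hc.1, hc'.1] | linarith [hy.2, hc.2, hc'.2])
  have h2 : (c' - c)*(2*y - c - c') ≤ |c' - c| * |2*y - c - c'| := by
    calc (c' - c)*(2*y - c - c') ≤ |(c' - c)*(2*y - c - c')| := le_abs_self _
      _ = |c' - c| * |2*y - c - c'| := abs_mul _ _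
  have h3 : |c' - c| * |2*y - c - c'| ≤ ε * 4 :=
    mul_le_mul (by rwa [abs_sub_comm]) h1 (abs_nonneg _) ((abs_nonneg _).trans hd)
  linarith

end MainProof


set_option maxHeartbeats 1000000 in
/-- Corollary 7: for a compact class `𝓕 ⊆ C(X)` with
`L = limsup_{ε→0} H_ε(𝓕)·ε^γ ∈ (0,∞)`, the regret is
`O(L^{1/(γ+1)} N^{γ/(γ+1)})`. -/
theorem stmt11 : ∃ C : ℝ, 0 < C ∧
    ∀ (X : Type u) [MetricSpace X] [CompactSpace X] (𝓕 : Set C(X, ℝ)) (γ L : ℝ),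
      0 < γ →
      IsCompact 𝓕 →
      Filter.IsBoundedUnder (· ≤ ·) (nhdsWithin 0 (Set.Ioi 0))
        (fun ε : ℝ => metricEntropy 𝓕 ε * ε ^ γ) →
      L = Filter.limsup (fun ε : ℝ => metricEntropy 𝓕 ε * ε ^ γ)
            (nhdsWithin 0 (Set.Ioi 0)) →
      0 < L →
      ∃ σ : List (X × ℝ) → X → ℝ,
        ∀ x : ℕ → X, ∀ y : ℕ → ℝ, (∀ n, y n ∈ Set.Icc (-1 : ℝ) 1) →
          ∃ N₀ : ℕ, ∀ N ≥ N₀, ∀ F ∈ 𝓕,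
            ∑ n ∈ Finset.range N, (y n - preds σ x y n) ^ 2 ≤
              ∑ n ∈ Finset.range N, (y n - F (x n)) ^ 2 +
                C * L ^ (1 / (γ + 1)) * (N : ℝ) ^ (γ / (γ + 1)) := by
  refine ⟨100, by norm_num, ?_⟩
  intro X _ _ 𝓕 γ L hγ hcomp hbdd hLdef hLpos
  classical
  have hγ1 : (0:ℝ) < γ + 1 := by linarith
  -- 𝓕 is nonempty
  have hne : 𝓕.Nonempty := by
    rcases Set.eq_empty_or_nonempty 𝓕 with h | h
    · exfalso
      rw [hLdef] at hLpos
      have hzero : (fun ε : ℝ => metricEntropy 𝓕 ε * ε ^ γ) = fun _ => (0:ℝ) := by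
        funext ε; rw [h, metricEntropy_empty]; ring
      rw [hzero, Filter.limsup_const] at hLpos
      exact lt_irrefl 0 hLpos
    · exact h
  obtain ⟨F₀, hF₀⟩ := hne
  -- eventual entropy bound near 0
  have hevent : ∀ᶠ ε in nhdsWithin (0:ℝ) (Set.Ioi 0),
      metricEntropy 𝓕 ε * ε ^ γ < 2*L := by
    apply Filter.eventually_lt_of_limsup_lt _ hbdd
    rw [← hLdef]; linarith
  obtain ⟨ε₀, hε₀, hevball⟩ : ∃ ε₀ > 0, ∀ ε : ℝ, 0 < ε → ε < ε₀ →
      metricEntropy 𝓕 ε * ε ^ γ < 2*L := by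
    rw [eventually_nhdsWithin_iff, Metric.eventually_nhds_iff] at hevent
    obtain ⟨δ, hδ, hball⟩ := hevent
    exact ⟨δ, hδ, fun ε hε1 hε2 =>
      hball (by rw [Real.dist_eq, sub_zero, abs_of_pos hε1]; exact hε2) hε1⟩
  obtain ⟨k₀, hk₀⟩ : ∃ k₀ : ℕ, (1/2:ℝ)^k₀ < ε₀ :=
    exists_pow_lt_of_lt_one hε₀ (by norm_num)
  -- minimal nets at scales (1/2)^k
  have hnet : ∀ k : ℕ, ∃ T : Finset C(X,ℝ), ↑T ⊆ 𝓕 ∧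
      T.card = coveringNumber 𝓕 ((1/2:ℝ)^k) ∧
      ∀ a ∈ 𝓕, ∃ b ∈ T, dist a b ≤ (1/2:ℝ)^k :=
    fun k => exists_net hcomp (by positivity)
  choose S hS1 hS2 hS3 using hnet
  have hcard : ∀ k, 0 < (S k).card := by
    intro k
    obtain ⟨b, hb, _⟩ := hS3 k F₀ hF₀
    exact Finset.card_pos.2 ⟨b, hb⟩
  -- entropy bound on card of nets
  have hent : ∀ k : ℕ, k₀ ≤ k →
      Real.log ((S k).card) ≤ 2*L * (2:ℝ)^((k:ℝ)*γ) * Real.log 2 := by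
    intro k hk
    have hεk : (0:ℝ) < (1/2:ℝ)^k := by positivity
    have hlt : (1/2:ℝ)^k < ε₀ :=
      lt_of_le_of_lt (pow_le_pow_of_le_one (by norm_num) (by norm_num) hk) hk₀
    have hH := hevball _ hεk hlt
    have hme : metricEntropy 𝓕 ((1/2:ℝ)^k) = Real.logb 2 ((S k).card) := by
      rw [metricEntropy, hS2 k]
    have hhalf : ((1/2:ℝ))^k = (2:ℝ)^(-(k:ℝ)) := by
      rw [Real.rpow_neg (by norm_num), Real.rpow_natCast, one_div, inv_pow]
    have hpow : ((1/2:ℝ)^k) ^ γ = ((2:ℝ)^((k:ℝ)*γ))⁻¹ := by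
      rw [hhalf, ← Real.rpow_mul (by norm_num : (0:ℝ) ≤ 2), neg_mul,
        Real.rpow_neg (by norm_num : (0:ℝ) ≤ 2)]
    rw [hme, hpow] at hH
    have hz : (0:ℝ) < (2:ℝ)^((k:ℝ)*γ) := Real.rpow_pos_of_pos (by norm_num) _
    have h1 : Real.logb 2 ((S k).card) < 2*L * (2:ℝ)^((k:ℝ)*γ) := by
      have h2 := mul_lt_mul_of_pos_right hH hz
      rw [mul_assoc, inv_mul_cancel₀ hz.ne', mul_one] at h2
      linarith [h2]
    have hlog2 : (0:ℝ) < Real.log 2 := Real.log_pos (by norm_num)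
    have h3 : Real.log ((S k).card) = Real.logb 2 ((S k).card) * Real.log 2 := by
      rw [Real.logb, div_mul_cancel₀ _ hlog2.ne']
    rw [h3]
    exact mul_le_mul_of_nonneg_right h1.le hlog2.le
  haveI hnei : Nonempty ((k : ℕ) × {f : C(X,ℝ) // f ∈ S k}) := by
    obtain ⟨b, hb, _⟩ := hS3 0 F₀ hF₀
    exact ⟨⟨0, ⟨b, hb⟩⟩⟩
  set w : ((k : ℕ) × {f : C(X,ℝ) // f ∈ S k}) → ℝ := netWeight S with hwdef
  have hw : ∀ e, 0 < w e := netWeight_pos S hcard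
  have hsw : Summable w := summable_netWeight S hcard
  -- the strategy
  refine ⟨fun h x₀ =>
    (∑' e : (k : ℕ) × {f : C(X,ℝ) // f ∈ S k},
      (w e * Real.exp (-((h.map (fun p => (p.2 - clip (e.2.1 p.1))^2)).sum)/32)) *
        clip (e.2.1 x₀)) /
    (∑' e : (k : ℕ) × {f : C(X,ℝ) // f ∈ S k},
      w e * Real.exp (-((h.map (fun p => (p.2 - clip (e.2.1 p.1))^2)).sum)/32)), ?_⟩
  intro x y hyIcc
  set v : ((k : ℕ) × {f : C(X,ℝ) // f ∈ S k}) → ℕ → ℝ :=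
    fun e n => clip (e.2.1 (x n)) with hvdef
  have hv : ∀ e n, |v e n| ≤ 1 := fun e n => abs_clip_le _
  have hy' : ∀ n, |y n| ≤ 1 := fun n => abs_le.2 ⟨(hyIcc n).1, (hyIcc n).2⟩
  -- predictions agree with the aggregating predictor
  have hpreds : ∀ n, preds (fun h x₀ =>
      (∑' e : (k : ℕ) × {f : C(X,ℝ) // f ∈ S k},
        (w e * Real.exp (-((h.map (fun p => (p.2 - clip (e.2.1 p.1))^2)).sum)/32)) *
          clip (e.2.1 x₀)) /
      (∑' e : (k : ℕ) × {f : C(X,ℝ) // f ∈ S k},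
        w e * Real.exp (-((h.map (fun p => (p.2 - clip (e.2.1 p.1))^2)).sum)/32))) x y n
      = predAgg w v y n := by
    intro n
    have hsum : ∀ e : (k : ℕ) × {f : C(X,ℝ) // f ∈ S k},
        ((((List.range n).map fun i => (x i, y i)).map
          (fun p => (p.2 - clip (e.2.1 p.1))^2)).sum) = cumLoss v y e n := by
      intro e
      rw [List.map_map, list_range_map_sum]
      rfl
    simp only [preds]
    rw [predAgg]
    congr 1
    · apply tsum_congr
      intro e
      rw [hsum e]
      rfl
    · apply tsum_congr
      intro e
      rw [hsum e]
      rfl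
  have hreg := agg_regret w v y hw hsw hv hy' (tsum_netWeight_le_one S hcard)
  -- eventually-large-N conditions
  have e2 : ∀ᶠ s : ℝ in Filter.atTop,
      (k₀:ℝ) ≤ Real.logb 2 (s/(2*L)) / (γ+1) := by
    have hdiv : Filter.Tendsto (fun s : ℝ => s/(2*L)) Filter.atTop Filter.atTop :=
      Filter.tendsto_id.atTop_div_const (by linarith)
    have hlog : Filter.Tendsto (fun s : ℝ => Real.logb 2 (s/(2*L)))
        Filter.atTop Filter.atTop := by
      have h1 := Real.tendsto_log_atTop.comp hdiv
      have h2 : Filter.Tendsto (fun s : ℝ => Real.log (s/(2*L)) / Real.log 2)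
          Filter.atTop Filter.atTop :=
        h1.atTop_div_const (Real.log_pos (by norm_num))
      exact h2.congr (fun s => rfl)
    exact (hlog.atTop_div_const hγ1).eventually_ge_atTop _
  have e3 : ∀ᶠ s : ℝ in Filter.atTop,
      32*(Real.logb 2 (s/(2*L))/(γ+1) + 1)*Real.log 2 ≤
        L^(1/(γ+1)) * s^(γ/(γ+1)) := by
    have hc : 0 < L^(1/(γ+1)) := Real.rpow_pos_of_pos hLpos _
    have hr : 0 < γ/(γ+1) := div_pos hγ hγ1
    have haff := eventually_affine_log_le (32/(γ+1))
      (32*Real.log 2 - (32*Real.log (2*L))/(γ+1)) (L^(1/(γ+1))) (γ/(γ+1)) hc hr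
    filter_upwards [haff, Filter.eventually_gt_atTop (0:ℝ)] with s hs hs0
    have hlogb : Real.logb 2 (s/(2*L)) = (Real.log s - Real.log (2*L))/Real.log 2 := by
      rw [Real.logb, Real.log_div hs0.ne' (by positivity : (2*L) ≠ 0)]
    rw [hlogb]
    have hlog2 : Real.log 2 ≠ 0 := (Real.log_pos (by norm_num)).ne'
    have heq : 32*((Real.log s - Real.log (2*L))/Real.log 2/(γ+1) + 1)*Real.log 2
        = (32/(γ+1)) * Real.log s + (32*Real.log 2 - (32*Real.log (2*L))/(γ+1)) := by
      field_simp
      ring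
    rw [heq]
    exact hs
  have hall := (Filter.eventually_ge_atTop (1:ℝ)).and (e2.and e3)
  rw [Filter.eventually_atTop] at hall
  obtain ⟨s₀, hs₀⟩ := hall
  refine ⟨⌈s₀⌉₊, ?_⟩
  intro N hN F hF
  have hsN : s₀ ≤ (N:ℝ) := (Nat.le_ceil s₀).trans (by exact_mod_cast hN)
  obtain ⟨hN1, hN2, hN3⟩ := hs₀ (N:ℝ) hsN
  -- scale choice
  set t : ℝ := Real.logb 2 ((N:ℝ)/(2*L)) / (γ+1) with htdef
  set k : ℕ := ⌊t⌋₊ with hkdef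
  have ht0 : 0 ≤ t := le_trans (by positivity) hN2
  have hkt : (k:ℝ) ≤ t := Nat.floor_le ht0
  have htk1 : t < (k:ℝ) + 1 := Nat.lt_floor_add_one t
  have hk₀k : k₀ ≤ k := Nat.le_floor hN2
  have hN0 : (0:ℝ) < (N:ℝ) := by linarith
  set M : ℝ := (N:ℝ)/(2*L) with hMdef
  have hM0 : 0 < M := by positivity
  have hMt : (2:ℝ)^(t*(γ+1)) = M := by
    rw [htdef, div_mul_cancel₀ _ hγ1.ne']
    exact Real.rpow_logb (by norm_num) (by norm_num) hM0
  -- the chosen expert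
  obtain ⟨f, hfS, hfd⟩ := hS3 k F hF
  set e : (k' : ℕ) × {g : C(X,ℝ) // g ∈ S k'} := ⟨k, ⟨f, hfS⟩⟩ with hedef
  -- approximation bound
  have happrox : cumLoss v y e N ≤
      ∑ n ∈ Finset.range N, (y n - F (x n))^2 + 4*(1/2:ℝ)^k*(N:ℝ) := by
    rw [cumLoss]
    have hterm : ∀ n ∈ Finset.range N,
        (y n - v e n)^2 ≤ (y n - F (x n))^2 + 4*(1/2:ℝ)^k := by
      intro n _
      have h2 : (y n - clip (F (x n)))^2 ≤ (y n - F (x n))^2 := sq_clip_le (hyIcc n)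
      have h1 : |clip (f (x n)) - clip (F (x n))| ≤ (1/2:ℝ)^k := by
        refine (clip_lipschitz _ _).trans ?_
        have hd := ContinuousMap.dist_apply_le_dist (f := f) (g := F) (x n)
        rw [Real.dist_eq] at hd
        refine hd.trans ?_
        rw [dist_comm]
        exact hfd
      have h3 := loss_compare (hy' n) (abs_clip_le (f (x n))) (abs_clip_le (F (x n))) h1
      calc (y n - v e n)^2 = (y n - clip (f (x n)))^2 := rfl
        _ ≤ (y n - clip (F (x n)))^2 + 4*(1/2:ℝ)^k := h3
        _ ≤ (y n - F (x n))^2 + 4*(1/2:ℝ)^k := by linarith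
    calc ∑ n ∈ Finset.range N, (y n - v e n)^2
        ≤ ∑ n ∈ Finset.range N, ((y n - F (x n))^2 + 4*(1/2:ℝ)^k) :=
          Finset.sum_le_sum hterm
      _ = ∑ n ∈ Finset.range N, (y n - F (x n))^2 + 4*(1/2:ℝ)^k*(N:ℝ) := by
          rw [Finset.sum_add_distrib, Finset.sum_const, Finset.card_range, nsmul_eq_mul]
          ring
  -- weight bound
  have hwe : 32 * Real.log (w e)⁻¹ =
      32*((k:ℝ)+1)*Real.log 2 + 32*Real.log ((S k).card) := by
    rw [hwdef, log_inv_netWeight S hcard e]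
    push_cast
    ring
  -- main rpow estimates
  have hGpos : 0 < L^(1/(γ+1)) * (N:ℝ)^(γ/(γ+1)) := by positivity
  have T1 : 4*(1/2:ℝ)^k*(N:ℝ) ≤ 16 * (L^(1/(γ+1)) * (N:ℝ)^(γ/(γ+1))) := by
    have hβle1 : 1/(γ+1) ≤ 1 := by
      rw [div_le_one hγ1]; linarith
    have hhalf : ((1/2:ℝ))^k = (2:ℝ)^(-(k:ℝ)) := by
      rw [Real.rpow_neg (by norm_num), Real.rpow_natCast, one_div, inv_pow]
    have h2t : M^(1/(γ+1)) = (2:ℝ)^t := by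
      rw [← hMt, ← Real.rpow_mul (by norm_num : (0:ℝ) ≤ 2)]
      congr 1
      field_simp
    have hεk2 : ((1/2:ℝ))^k ≤ 2 * (M^(1/(γ+1)))⁻¹ := by
      rw [hhalf, h2t]
      have h2 : (2:ℝ)^(-(k:ℝ)) ≤ (2:ℝ)^(-(t-1)) :=
        Real.rpow_le_rpow_of_exponent_le one_le_two (by linarith)
      have h3 : (2:ℝ)^(-(t-1)) = 2 * ((2:ℝ)^t)⁻¹ := by
        rw [show -(t-1) = 1 + (-t) from by ring, Real.rpow_add (by norm_num : (0:ℝ) < 2),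
          Real.rpow_one, Real.rpow_neg (by norm_num : (0:ℝ) ≤ 2)]
      rw [← h3]
      exact h2
    have hMsplit : M^(1/(γ+1)) = (N:ℝ)^(1/(γ+1)) / (2*L)^(1/(γ+1)) := by
      rw [hMdef, Real.div_rpow hN0.le (by positivity)]
    have h2L : (2*L)^(1/(γ+1)) ≤ 2 * L^(1/(γ+1)) := by
      rw [Real.mul_rpow (by norm_num) hLpos.le]
      have h2b : (2:ℝ)^(1/(γ+1)) ≤ 2 := by
        have h := Real.rpow_le_rpow_of_exponent_le one_le_two hβle1
        rwa [Real.rpow_one] at h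
      exact mul_le_mul_of_nonneg_right h2b (Real.rpow_pos_of_pos hLpos _).le
    have hNsplit : (N:ℝ)^(γ/(γ+1)) = (N:ℝ) / (N:ℝ)^(1/(γ+1)) := by
      have h := Real.rpow_sub hN0 1 (1/(γ+1))
      rw [show (1:ℝ) - 1/(γ+1) = γ/(γ+1) from by field_simp; ring, Real.rpow_one] at h
      exact h
    have hNβpos : (0:ℝ) < (N:ℝ)^(1/(γ+1)) := Real.rpow_pos_of_pos hN0 _
    have h2Lpos : (0:ℝ) < (2*L)^(1/(γ+1)) := Real.rpow_pos_of_pos (by linarith) _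
    calc 4*(1/2:ℝ)^k*(N:ℝ) ≤ 4*(2*(M^(1/(γ+1)))⁻¹)*(N:ℝ) :=
          mul_le_mul_of_nonneg_right
            (mul_le_mul_of_nonneg_left hεk2 (by norm_num)) hN0.le
      _ = 8 * ((2*L)^(1/(γ+1)) * ((N:ℝ)/(N:ℝ)^(1/(γ+1)))) := by
          rw [hMsplit, inv_div]
          field_simp
          ring
      _ ≤ 8 * ((2 * L^(1/(γ+1))) * ((N:ℝ)/(N:ℝ)^(1/(γ+1)))) := by
          apply mul_le_mul_of_nonneg_left _ (by norm_num)
          apply mul_le_mul_of_nonneg_right h2L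
          positivity
      _ = 16 * (L^(1/(γ+1)) * (N:ℝ)^(γ/(γ+1))) := by
          rw [hNsplit]
          ring
  have T2 : 32*((k:ℝ)+1)*Real.log 2 ≤ L^(1/(γ+1)) * (N:ℝ)^(γ/(γ+1)) := by
    have hlog2 : (0:ℝ) ≤ Real.log 2 := (Real.log_pos (by norm_num)).le
    have h1 : 32*((k:ℝ)+1)*Real.log 2 ≤ 32*(t+1)*Real.log 2 := by
      apply mul_le_mul_of_nonneg_right _ hlog2
      linarith
    exact h1.trans hN3
  have T3 : 32*Real.log ((S k).card) ≤ 45 * (L^(1/(γ+1)) * (N:ℝ)^(γ/(γ+1))) := by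
    have hr0 : (0:ℝ) ≤ γ/(γ+1) := le_of_lt (div_pos hγ hγ1)
    have hc2 : (2:ℝ)^((k:ℝ)*γ) ≤ M^(γ/(γ+1)) := by
      have ha : (2:ℝ)^((k:ℝ)*(γ+1)) ≤ M := by
        calc (2:ℝ)^((k:ℝ)*(γ+1)) ≤ (2:ℝ)^(t*(γ+1)) :=
              Real.rpow_le_rpow_of_exponent_le one_le_two
                (mul_le_mul_of_nonneg_right hkt hγ1.le)
          _ = M := hMt
      have hkeq : (k:ℝ)*γ = ((k:ℝ)*(γ+1)) * (γ/(γ+1)) := by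
        field_simp
      rw [hkeq, Real.rpow_mul (by norm_num : (0:ℝ) ≤ 2)]
      exact Real.rpow_le_rpow (Real.rpow_nonneg (by norm_num) _) ha hr0
    have hLM : L * M^(γ/(γ+1)) ≤ L^(1/(γ+1)) * (N:ℝ)^(γ/(γ+1)) := by
      have hMr : M^(γ/(γ+1)) = (N:ℝ)^(γ/(γ+1)) / (2*L)^(γ/(γ+1)) := by
        rw [hMdef, Real.div_rpow hN0.le (by positivity)]
      have hLr : (2*L)^(γ/(γ+1)) = (2:ℝ)^(γ/(γ+1)) * L^(γ/(γ+1)) :=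
        Real.mul_rpow (by norm_num) hLpos.le
      have h2r : (1:ℝ) ≤ (2:ℝ)^(γ/(γ+1)) := by
        have h := Real.rpow_le_rpow_of_exponent_le one_le_two hr0
        rwa [Real.rpow_zero] at h
      have hLsplit : L = L^(1/(γ+1)) * L^(γ/(γ+1)) := by
        have hpl : 1/(γ+1)+γ/(γ+1) = (1:ℝ) := by
          field_simp
          ring
        rw [← Real.rpow_add hLpos, hpl, Real.rpow_one]
      have hLrpos : 0 < L^(γ/(γ+1)) := Real.rpow_pos_of_pos hLpos _
      have h2rpos : 0 < (2:ℝ)^(γ/(γ+1)) := Real.rpow_pos_of_pos (by norm_num) _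
      rw [hMr, hLr]
      calc L * ((N:ℝ)^(γ/(γ+1)) / ((2:ℝ)^(γ/(γ+1)) * L^(γ/(γ+1))))
          = (L^(1/(γ+1)) * L^(γ/(γ+1))) *
              ((N:ℝ)^(γ/(γ+1)) / ((2:ℝ)^(γ/(γ+1)) * L^(γ/(γ+1)))) := by rw [← hLsplit]
        _ = (L^(1/(γ+1)) * (N:ℝ)^(γ/(γ+1))) / (2:ℝ)^(γ/(γ+1)) := by
            field_simp
        _ ≤ L^(1/(γ+1)) * (N:ℝ)^(γ/(γ+1)) := div_le_self hGpos.le h2r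
    have h4 := hent k hk₀k
    have hlog2lt : Real.log 2 < 0.6931471808 := Real.log_two_lt_d9
    have hlog2pos : (0:ℝ) < Real.log 2 := Real.log_pos (by norm_num)
    calc 32*Real.log ((S k).card) ≤ 32*(2*L * (2:ℝ)^((k:ℝ)*γ) * Real.log 2) := by
          linarith
      _ = 64*Real.log 2 * (L * (2:ℝ)^((k:ℝ)*γ)) := by ring
      _ ≤ 64*Real.log 2 * (L * M^(γ/(γ+1))) := by
          apply mul_le_mul_of_nonneg_left _ (by positivity)
          exact mul_le_mul_of_nonneg_left hc2 hLpos.le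
      _ ≤ 64*Real.log 2 * (L^(1/(γ+1)) * (N:ℝ)^(γ/(γ+1))) :=
          mul_le_mul_of_nonneg_left hLM (by positivity)
      _ ≤ 45 * (L^(1/(γ+1)) * (N:ℝ)^(γ/(γ+1))) := by
          have h45 : 64*Real.log 2 ≤ 45 := by linarith
          exact mul_le_mul_of_nonneg_right h45 hGpos.le
  -- put everything together
  have hfinal := hreg e N
  rw [hwe] at hfinal
  have hsum_eq : ∑ n ∈ Finset.range N, (y n - preds (fun h x₀ =>
      (∑' e : (k : ℕ) × {f : C(X,ℝ) // f ∈ S k},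
        (w e * Real.exp (-((h.map (fun p => (p.2 - clip (e.2.1 p.1))^2)).sum)/32)) *
          clip (e.2.1 x₀)) /
      (∑' e : (k : ℕ) × {f : C(X,ℝ) // f ∈ S k},
        w e * Real.exp (-((h.map (fun p => (p.2 - clip (e.2.1 p.1))^2)).sum)/32))) x y n)^2
      = ∑ n ∈ Finset.range N, (y n - predAgg w v y n)^2 :=
    Finset.sum_congr rfl (fun n _ => by rw [hpreds n])
  rw [hsum_eq]
  have hC : (100:ℝ) * L^(1/(γ+1)) * (N:ℝ)^(γ/(γ+1))
      = 100 * (L^(1/(γ+1)) * (N:ℝ)^(γ/(γ+1))) := by ring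
  rw [hC]
  linarith [hfinal, happrox, T1, T2, T3, hGpos]
end

section
/- There is a universal constant C > 0 with the following property. Let X be a compact metric space, let 𝓕 be a Banach space that is a linear subspace of C(X) compactly embedded in C(X) (its unit ball U_𝓕 is compact in the sup-norm metric), and let γ > 0 be such that L := limsup_{ε→0} H_ε(U_𝓕) · ε^γ satisfies L ∈ (0, ∞). There exists a prediction strategy that guarantees, for every sequence of signals x₁, x₂, … ∈ X and observations y₁, y₂, … ∈ [−1, 1]: for every F ∈ 𝓕 there is N₀ such that for all N ≥ N₀, Σ_{n=1}^N (yₙ − μₙ)² ≤ Σ_{n=1}^N (yₙ − F(xₙ))² + C · L^{1/(γ+1)} · φ^{γ/(γ+1)} · N^{γ/(γ+1)}, where φ := 2 max(1, ‖F‖_𝓕). -/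
open scoped BigOperators

universe u v

open Real

noncomputable def clmp (t : ℝ) : ℝ := max (-1) (min 1 t)

lemma clmp_mem (t : ℝ) : |clmp t| ≤ 1 := by
  rw [abs_le]; constructor
  · exact le_max_left _ _
  · exact max_le (by norm_num) (min_le_left _ _)

lemma clmp_lip (s t : ℝ) : |clmp s - clmp t| ≤ |s - t| := by
  unfold clmp
  rw [max_comm (-1) (min 1 s), max_comm (-1) (min 1 t)]
  refine (abs_max_sub_max_le_abs (min 1 s) (min 1 t) (-1)).trans ?_
  rw [min_comm 1 s, min_comm 1 t]
  refine (abs_min_sub_min_le_max s 1 t 1).trans ?_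
  simp

lemma clmp_sq {y t : ℝ} (hy : |y| ≤ 1) : (y - clmp t) ^ 2 ≤ (y - t) ^ 2 := by
  rw [abs_le] at hy
  unfold clmp
  rcases le_total t (-1) with h | h
  · rw [min_eq_right (by linarith : t ≤ 1), max_eq_left h]
    nlinarith
  · rcases le_total 1 t with h1 | h1
    · rw [min_eq_left h1, max_eq_right (by norm_num : (-1:ℝ) ≤ 1)]
      nlinarith
    · rw [min_eq_right h1, max_eq_right h]

lemma logA {u : ℝ} (hu : 0 ≤ u) : u - u^2/2 ≤ Real.log (1+u) := by
  have key : ∀ v ∈ Set.Ici (0:ℝ), HasDerivAt (fun w => Real.log (1+w) - w + w^2/2)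
      (1/(1+v) - 1 + v) v := by
    intro v hv
    have h1 : (0:ℝ) < 1 + v := by simp at hv; linarith
    have hd : HasDerivAt (fun w : ℝ => 1 + w) 1 v := (hasDerivAt_id v).const_add 1
    have hlog := hd.log (ne_of_gt h1)
    exact ((hlog.sub (hasDerivAt_id v)).add
      ((hasDerivAt_pow 2 v).div_const 2)).congr_deriv (by norm_num)
  have hmono : MonotoneOn (fun w => Real.log (1+w) - w + w^2/2) (Set.Ici (0:ℝ)) := by
    apply monotoneOn_of_deriv_nonneg (convex_Ici 0)
    · exact fun v hv => ((key v hv).continuousAt).continuousWithinAt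
    · intro v hv
      rw [interior_Ici] at hv
      exact ((key v (Set.mem_Ici.mpr (le_of_lt (Set.mem_Ioi.mp hv)))).differentiableAt).differentiableWithinAt
    · intro v hv
      rw [interior_Ici] at hv
      rw [(key v (Set.mem_Ici.mpr (le_of_lt (Set.mem_Ioi.mp hv)))).deriv]
      have h1 : (0:ℝ) < 1 + v := by linarith [Set.mem_Ioi.mp hv]
      have heq : 1/(1+v) - 1 + v = v^2/(1+v) := by field_simp; ring
      rw [heq]
      positivity
  have h0 := hmono (Set.mem_Ici.mpr (le_refl (0:ℝ))) (Set.mem_Ici.mpr hu) hu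
  simp at h0
  linarith

lemma logB {u : ℝ} (hu : -(1/4) ≤ u) (hu0 : u ≤ 0) :
    u - u^2/(2*(1+u)) ≤ Real.log (1+u) := by
  have key : ∀ v ∈ Set.Icc (-(1/4):ℝ) 0, HasDerivAt
      (fun w => Real.log (1+w) - w + w^2/(2*(1+w)))
      (1/(1+v) - 1 + (2*v*(2*(1+v)) - v^2*2)/(2*(1+v))^2) v := by
    intro v hv
    obtain ⟨hv1, hv2⟩ := hv
    have h1 : (0:ℝ) < 1 + v := by linarith
    have hd : HasDerivAt (fun w : ℝ => 1 + w) 1 v := (hasDerivAt_id v).const_add 1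
    have hlog := hd.log (ne_of_gt h1)
    have hden : HasDerivAt (fun w : ℝ => 2*(1+w)) 2 v := by
      simpa using ((hasDerivAt_id v).const_add 1).const_mul 2
    have hsq : HasDerivAt (fun w : ℝ => w^2) (2*v) v := by
      simpa using hasDerivAt_pow 2 v
    have hq := hsq.div hden (by positivity)
    have := (hlog.sub (hasDerivAt_id v)).add hq
    exact this
  have hanti : AntitoneOn (fun w => Real.log (1+w) - w + w^2/(2*(1+w)))
      (Set.Icc (-(1/4):ℝ) 0) := by
    apply antitoneOn_of_deriv_nonpos (convex_Icc _ _)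
    · exact fun v hv => ((key v hv).continuousAt).continuousWithinAt
    · intro v hv
      rw [interior_Icc] at hv
      exact ((key v (Set.mem_Icc_of_Ioo hv)).differentiableAt).differentiableWithinAt
    · intro v hv
      rw [interior_Icc] at hv
      rw [(key v (Set.mem_Icc_of_Ioo hv)).deriv]
      obtain ⟨hv1, hv2⟩ := hv
      have h1 : (0:ℝ) < 1 + v := by linarith
      have heq : 1/(1+v) - 1 + (2*v*(2*(1+v)) - v^2*2)/(2*(1+v))^2
          = -(v^2/(2*(1+v)^2)) := by field_simp; ring
      rw [heq]
      have : 0 ≤ v^2/(2*(1+v)^2) := by positivity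
      linarith
  have h0 := hanti (Set.mem_Icc.mpr ⟨hu, hu0⟩) (Set.mem_Icc.mpr ⟨by norm_num, le_refl 0⟩) hu0
  simp only [Real.log_one, add_zero] at h0
  norm_num at h0
  linarith

lemma tangent_core {a d : ℝ} (h1 : a^2 ≤ 4) (h3 : (a-d)^2 ≤ 4) :
    Real.exp (a*d/4 - d^2/8) ≤ 1 + a*d/4 := by
  have had : -1 ≤ a*d := by nlinarith [sq_nonneg (a+d)]
  have hu1 : (0:ℝ) < 1 + a*d/4 := by linarith
  have key : a*d/4 - Real.log (1+a*d/4) ≤ d^2/8 := by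
    rcases le_total 0 (a*d/4) with h | h
    · have hA := logA h
      have hm : 0 ≤ (4 - a^2) * d^2 := mul_nonneg (by linarith) (sq_nonneg d)
      nlinarith [hA, hm]
    · have hB := logB (by linarith) h
      have h4 : 0 ≤ 4 + a*d - a^2 := by nlinarith [sq_nonneg d]
      have hm : 0 ≤ (4 + a*d - a^2) * d^2 := mul_nonneg h4 (sq_nonneg d)
      have h5 : (a*d/4)^2/(2*(1+a*d/4)) ≤ d^2/8 := by
        rw [div_le_div_iff₀ (by positivity) (by norm_num)]
        nlinarith [hm]
      linarith
  calc Real.exp (a*d/4 - d^2/8) ≤ Real.exp (Real.log (1+a*d/4)) :=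
        Real.exp_le_exp.mpr (by linarith)
    _ = 1 + a*d/4 := Real.exp_log hu1

lemma tangent {y p μ : ℝ} (hy : |y| ≤ 1) (hp : |p| ≤ 1) (hμ : |μ| ≤ 1) :
    Real.exp (-(y - p)^2/8) ≤ Real.exp (-(y - μ)^2/8) * (1 + (y - μ)*(p - μ)/4) := by
  rw [abs_le] at hy hp hμ
  have h1 : (y - μ)^2 ≤ 4 := by nlinarith [hy.1, hy.2, hμ.1, hμ.2]
  have h3 : ((y - μ) - (p - μ))^2 ≤ 4 := by nlinarith [hy.1, hy.2, hp.1, hp.2]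
  have hcore := tangent_core h1 h3
  have hsplit : -(y-p)^2/8 = -(y-μ)^2/8 + ((y - μ)*(p - μ)/4 - (p - μ)^2/8) := by ring
  rw [hsplit, Real.exp_add]
  exact mul_le_mul_of_nonneg_left hcore (Real.exp_nonneg _)

lemma clmp_cmp {y u g Δ : ℝ} (hy : |y| ≤ 1) (hug : |u - g| ≤ Δ) :
    (y - clmp g)^2 ≤ (y - u)^2 + 4*Δ := by
  have hA := abs_le.mp (clmp_mem u)
  have hB := abs_le.mp (clmp_mem g)
  have hyy := abs_le.mp hy
  have hlip := abs_le.mp ((clmp_lip u g).trans hug)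
  have hsq := clmp_sq (t := u) hy
  have h1 : 0 ≤ (Δ - (clmp u - clmp g)) * (4 + (2*y - clmp u - clmp g)) :=
    mul_nonneg (by linarith) (by linarith)
  have h2 : 0 ≤ (Δ + (clmp u - clmp g)) * (4 - (2*y - clmp u - clmp g)) :=
    mul_nonneg (by linarith) (by linarith)
  nlinarith [hsq, h1, h2]

open Real
section AAdef
variable {Z I : Type*}

noncomputable def aaLoss (P : I → Z → ℝ) (j : I) (h : List (Z × ℝ)) : ℝ :=
  (h.map (fun p => (p.2 - P j p.1)^2)).sum

noncomputable def aaWt (w : I → ℝ) (P : I → Z → ℝ) (h : List (Z × ℝ)) (j : I) : ℝ :=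
  w j * Real.exp (-(aaLoss P j h)/8)

noncomputable def aaS (w : I → ℝ) (P : I → Z → ℝ) : List (Z × ℝ) → Z → ℝ :=
  fun h z => (∑' j, aaWt w P h j * P j z) / (∑' j, aaWt w P h j)

variable {w : I → ℝ} {P : I → Z → ℝ}

lemma aaLoss_nonneg (j : I) (h : List (Z × ℝ)) : 0 ≤ aaLoss P j h := by
  apply List.sum_nonneg
  intro a ha
  obtain ⟨p, _, rfl⟩ := List.mem_map.mp ha
  positivity

lemma aaWt_nonneg (hw0 : ∀ j, 0 ≤ w j) (h : List (Z × ℝ)) (j : I) : 0 ≤ aaWt w P h j :=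
  mul_nonneg (hw0 j) (Real.exp_nonneg _)

lemma aaWt_le (hw0 : ∀ j, 0 ≤ w j) (h : List (Z × ℝ)) (j : I) : aaWt w P h j ≤ w j := by
  have : Real.exp (-(aaLoss P j h)/8) ≤ 1 := by
    rw [Real.exp_le_one_iff]
    have := aaLoss_nonneg (P := P) j h
    linarith
  calc aaWt w P h j ≤ w j * 1 := mul_le_mul_of_nonneg_left this (hw0 j)
    _ = w j := mul_one _

lemma aaWt_summable (hw0 : ∀ j, 0 ≤ w j) (hsum : Summable w) (h : List (Z × ℝ)) :
    Summable (aaWt w P h) :=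
  Summable.of_nonneg_of_le (aaWt_nonneg hw0 h) (aaWt_le hw0 h) hsum

lemma aaWtP_summable (hw0 : ∀ j, 0 ≤ w j) (hsum : Summable w) (hP : ∀ j z, |P j z| ≤ 1)
    (h : List (Z × ℝ)) (z : Z) : Summable (fun j => aaWt w P h j * P j z) := by
  apply Summable.of_abs
  apply Summable.of_nonneg_of_le (fun j => abs_nonneg _) _ hsum
  intro j
  rw [abs_mul, abs_of_nonneg (aaWt_nonneg hw0 h j)]
  calc aaWt w P h j * |P j z| ≤ aaWt w P h j * 1 :=
        mul_le_mul_of_nonneg_left (hP j z) (aaWt_nonneg hw0 h j)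
    _ ≤ w j := by rw [mul_one]; exact aaWt_le hw0 h j

lemma aaPhi_pos (hw0 : ∀ j, 0 ≤ w j) (hsum : Summable w) (h : List (Z × ℝ))
    (j0 : I) (hj0 : 0 < w j0) : 0 < ∑' j, aaWt w P h j :=
  Summable.tsum_pos (aaWt_summable hw0 hsum h) (aaWt_nonneg hw0 h) j0
    (mul_pos hj0 (Real.exp_pos _))

lemma aaS_abs_le (hw0 : ∀ j, 0 ≤ w j) (hsum : Summable w) (hP : ∀ j z, |P j z| ≤ 1)
    (h : List (Z × ℝ)) (z : Z) (j0 : I) (hj0 : 0 < w j0) : |aaS w P h z| ≤ 1 := by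
  have hΦ := aaPhi_pos (P := P) hw0 hsum h j0 hj0
  rw [aaS, abs_div, abs_of_pos hΦ, div_le_one hΦ]
  calc |∑' j, aaWt w P h j * P j z| ≤ ∑' j, |aaWt w P h j * P j z| := by
        have habs : Summable fun j => ‖aaWt w P h j * P j z‖ := by
          simpa only [Real.norm_eq_abs] using (aaWtP_summable hw0 hsum hP h z).abs
        simpa only [Real.norm_eq_abs] using norm_tsum_le_tsum_norm habs
    _ ≤ ∑' j, aaWt w P h j := by
        apply Summable.tsum_le_tsum _ ((aaWtP_summable hw0 hsum hP h z).abs) (aaWt_summable hw0 hsum h)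
        intro j
        rw [abs_mul, abs_of_nonneg (aaWt_nonneg hw0 h j)]
        calc aaWt w P h j * |P j z| ≤ aaWt w P h j * 1 :=
              mul_le_mul_of_nonneg_left (hP j z) (aaWt_nonneg hw0 h j)
          _ = aaWt w P h j := mul_one _

lemma aaLoss_append (j : I) (h : List (Z × ℝ)) (z : Z) (yc : ℝ) :
    aaLoss P j (h ++ [(z, yc)]) = aaLoss P j h + (yc - P j z)^2 := by
  simp [aaLoss]

lemma aaWt_append (j : I) (h : List (Z × ℝ)) (z : Z) (yc : ℝ) :
    aaWt w P (h ++ [(z, yc)]) j = aaWt w P h j * Real.exp (-(yc - P j z)^2/8) := by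
  rw [aaWt, aaWt, aaLoss_append, mul_assoc, ← Real.exp_add]
  ring_nf

lemma aa_round (hw0 : ∀ j, 0 ≤ w j) (hsum : Summable w) (hP : ∀ j z, |P j z| ≤ 1)
    (h : List (Z × ℝ)) (z : Z) {yc : ℝ} (hy : |yc| ≤ 1) (j0 : I) (hj0 : 0 < w j0) :
    (∑' j, aaWt w P (h ++ [(z, yc)]) j) ≤
      Real.exp (-(yc - aaS w P h z)^2/8) * ∑' j, aaWt w P h j := by
  set μ := aaS w P h z with hμdef
  have hμ : |μ| ≤ 1 := aaS_abs_le hw0 hsum hP h z j0 hj0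
  have hΦ := aaPhi_pos (P := P) hw0 hsum h j0 hj0
  set E := Real.exp (-(yc - μ)^2/8) with hE
  have hE0 : 0 < E := Real.exp_pos _
  have hWt := aaWt_nonneg (P := P) hw0 h
  have hsum1 := aaWt_summable (P := P) hw0 hsum h
  have hsum2 := aaWtP_summable hw0 hsum hP h z
  -- summability of RHS-expanded
  have hsum3 : Summable (fun j => aaWt w P h j * (E * (1 + (yc - μ)*(P j z - μ)/4))) := by
    have e1 : (fun j => aaWt w P h j * (E * (1 + (yc - μ)*(P j z - μ)/4)))
        = fun j => (E * (1 - (yc - μ)*μ/4)) * aaWt w P h j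
            + (E * (yc - μ)/4) * (aaWt w P h j * P j z) := by
      funext j; ring
    rw [e1]
    exact ((hsum1.mul_left _).add (hsum2.mul_left _))
  have step1 : (∑' j, aaWt w P (h ++ [(z, yc)]) j) ≤
      ∑' j, aaWt w P h j * (E * (1 + (yc - μ)*(P j z - μ)/4)) := by
    have hsumL : Summable (fun j => aaWt w P (h ++ [(z, yc)]) j) :=
      aaWt_summable hw0 hsum _
    apply Summable.tsum_le_tsum _ hsumL hsum3
    intro j
    rw [aaWt_append]
    exact mul_le_mul_of_nonneg_left (tangent hy (hP j z) hμ) (hWt j)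
  have step2 : (∑' j, aaWt w P h j * (E * (1 + (yc - μ)*(P j z - μ)/4))) = E * ∑' j, aaWt w P h j := by
    have e1 : (fun j => aaWt w P h j * (E * (1 + (yc - μ)*(P j z - μ)/4)))
        = fun j => (E * (1 - (yc - μ)*μ/4)) * aaWt w P h j
            + (E * (yc - μ)/4) * (aaWt w P h j * P j z) := by
      funext j; ring
    rw [e1, Summable.tsum_add ((hsum1.mul_left _)) ((hsum2.mul_left _)),
      tsum_mul_left, tsum_mul_left]
    have hS : (∑' j, aaWt w P h j * P j z) = μ * ∑' j, aaWt w P h j := by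
      rw [hμdef, aaS, div_mul_cancel₀]
      exact ne_of_gt hΦ
    rw [hS]
    ring
  rw [step2] at step1
  exact step1

end AAdef

lemma aa_main {Z I : Type*} (w : I → ℝ) (P : I → Z → ℝ)
    (hw0 : ∀ j, 0 ≤ w j) (hsum : Summable w) (htot : ∑' j, w j ≤ 1)
    (hP : ∀ j z, |P j z| ≤ 1) (x : ℕ → Z) (y : ℕ → ℝ) (hy : ∀ n, |y n| ≤ 1)
    (j : I) (hj : 0 < w j) (N : ℕ) :
    ∑ n ∈ Finset.range N, (y n - preds (aaS w P) x y n)^2 ≤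
      (∑ n ∈ Finset.range N, (y n - P j (x n))^2) - 8 * Real.log (w j) := by
  set hist : ℕ → List (Z × ℝ) := fun n => (List.range n).map fun i => (x i, y i) with hhist
  have hist_succ : ∀ n, hist (n+1) = hist n ++ [(x n, y n)] := by
    intro n; simp [hhist, List.range_succ]
  have tele : ∀ M, (∑' j', aaWt w P (hist M) j') ≤
      Real.exp (-(∑ n ∈ Finset.range M, (y n - preds (aaS w P) x y n)^2)/8) := by
    intro M
    induction M with
    | zero =>
      have h0 : (∑' j', aaWt w P (hist 0) j') = ∑' j', w j' := by
        apply tsum_congr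
        intro j'
        simp [aaWt, aaLoss, hhist]
      rw [h0]
      simpa using htot
    | succ M ih =>
      rw [hist_succ]
      calc (∑' j', aaWt w P (hist M ++ [(x M, y M)]) j')
          ≤ Real.exp (-(y M - aaS w P (hist M) (x M))^2/8) * ∑' j', aaWt w P (hist M) j' :=
            aa_round hw0 hsum hP _ _ (hy M) j hj
        _ ≤ Real.exp (-(y M - aaS w P (hist M) (x M))^2/8) *
              Real.exp (-(∑ n ∈ Finset.range M, (y n - preds (aaS w P) x y n)^2)/8) :=
            mul_le_mul_of_nonneg_left ih (Real.exp_nonneg _)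
        _ = Real.exp (-(∑ n ∈ Finset.range (M+1), (y n - preds (aaS w P) x y n)^2)/8) := by
            rw [← Real.exp_add, Finset.sum_range_succ]
            congr 1
            have : preds (aaS w P) x y M = aaS w P (hist M) (x M) := rfl
            rw [this]
            ring
  have hLoss : aaLoss P j (hist N) = ∑ n ∈ Finset.range N, (y n - P j (x n))^2 := by
    induction N with
    | zero => simp [aaLoss, hhist]
    | succ M ih => rw [hist_succ, aaLoss_append, ih, Finset.sum_range_succ]
  have hle : w j * Real.exp (-(aaLoss P j (hist N))/8) ≤
      Real.exp (-(∑ n ∈ Finset.range N, (y n - preds (aaS w P) x y n)^2)/8) := by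
    refine le_trans ?_ (tele N)
    exact Summable.le_tsum (aaWt_summable hw0 hsum _) j (fun i _ => aaWt_nonneg hw0 _ i)
  have hlog := Real.log_le_log (by positivity) hle
  rw [Real.log_mul (ne_of_gt hj) (ne_of_gt (Real.exp_pos _)), Real.log_exp, Real.log_exp,
    hLoss] at hlog
  linarith


noncomputable def wtri (c : ℕ → ℕ → ℕ) : ℕ × ℕ × ℕ → ℝ :=
  fun j => if j.2.2 < c j.1 j.2.1 then ((1/2:ℝ)^(j.1+1) * (1/2)^(j.2.1+1)) / (c j.1 j.2.1) else 0

lemma wtri_nonneg (c : ℕ → ℕ → ℕ) (j : ℕ × ℕ × ℕ) : 0 ≤ wtri c j := by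
  unfold wtri
  split
  · positivity
  · exact le_rfl

lemma wslice_summable (cc : ℕ) (a : ℝ) : Summable (fun i : ℕ => if i < cc then a / cc else 0) := by
  apply summable_of_ne_finset_zero (s := Finset.range cc)
  intro i hi
  simp only [Finset.mem_range] at hi
  simp [hi]

lemma wslice_tsum_le (cc : ℕ) (a : ℝ) (ha : 0 ≤ a) :
    (∑' i : ℕ, if i < cc then a / cc else 0) ≤ a := by
  rw [tsum_eq_sum (s := Finset.range cc)
    (by intro i hi; simp only [Finset.mem_range] at hi; simp [hi])]
  rcases Nat.eq_zero_or_pos cc with h | h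
  · simpa [h] using ha
  · have hc : (cc:ℝ) ≠ 0 := by exact_mod_cast h.ne'
    rw [Finset.sum_ite_of_true (by intro i hi; simpa using hi), Finset.sum_const,
      Finset.card_range, nsmul_eq_mul, mul_div_cancel₀ _ hc]

lemma geom_succ_summable : Summable (fun ℓ : ℕ => ((1/2:ℝ))^(ℓ+1)) := by
  have : (fun ℓ : ℕ => ((1/2:ℝ))^(ℓ+1)) = fun ℓ : ℕ => ((1/2:ℝ))^ℓ * (1/2) := by
    funext ℓ; ring
  rw [this]
  exact summable_geometric_two.mul_right _

lemma geom_succ_tsum : (∑' ℓ : ℕ, ((1/2:ℝ))^(ℓ+1)) = 1 := by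
  have : (fun ℓ : ℕ => ((1/2:ℝ))^(ℓ+1)) = fun ℓ : ℕ => (1/2) * ((1/2:ℝ))^ℓ := by
    funext ℓ; ring
  rw [this, tsum_mul_left, tsum_geometric_two]
  norm_num

section wtri_props
variable (c : ℕ → ℕ → ℕ)

lemma wtri_eq (m ℓ : ℕ) : (fun i => wtri c (m, ℓ, i)) =
    (fun i => if i < c m ℓ then ((1/2:ℝ)^(m+1) * (1/2)^(ℓ+1)) / (c m ℓ) else 0) := rfl

lemma wtri_inner_summable (m ℓ : ℕ) : Summable (fun i => wtri c (m, ℓ, i)) := by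
  rw [wtri_eq]
  exact wslice_summable (c m ℓ) _

lemma wtri_inner_tsum_le (m ℓ : ℕ) :
    (∑' i, wtri c (m, ℓ, i)) ≤ (1/2:ℝ)^(m+1) * (1/2)^(ℓ+1) := by
  rw [show (∑' i, wtri c (m, ℓ, i)) = ∑' i : ℕ,
      (if i < c m ℓ then ((1/2:ℝ)^(m+1) * (1/2)^(ℓ+1)) / (c m ℓ) else 0) from rfl]
  exact wslice_tsum_le (c m ℓ) _ (by positivity)

lemma wtri_mid_summable (m : ℕ) : Summable (fun ℓ => ∑' i, wtri c (m, ℓ, i)) := by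
  apply Summable.of_nonneg_of_le
    (fun ℓ => tsum_nonneg (fun i => wtri_nonneg c (m, ℓ, i)))
    (wtri_inner_tsum_le c m)
  exact geom_succ_summable.mul_left _

lemma wtri_pair_summable (m : ℕ) : Summable (fun p : ℕ × ℕ => wtri c (m, p)) := by
  apply (summable_prod_of_nonneg (fun p => wtri_nonneg c (m, p))).mpr
  refine ⟨fun ℓ => ?_, ?_⟩
  · exact wtri_inner_summable c m ℓ
  · exact wtri_mid_summable c m

lemma wtri_pair_tsum_le (m : ℕ) : (∑' p : ℕ × ℕ, wtri c (m, p)) ≤ (1/2:ℝ)^(m+1) := by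
  rw [Summable.tsum_prod' (wtri_pair_summable c m) (fun ℓ => wtri_inner_summable c m ℓ)]
  calc (∑' ℓ, ∑' i, wtri c (m, ℓ, i)) ≤ ∑' ℓ : ℕ, (1/2:ℝ)^(m+1) * (1/2)^(ℓ+1) :=
        Summable.tsum_le_tsum (wtri_inner_tsum_le c m) (wtri_mid_summable c m)
          (geom_succ_summable.mul_left _)
    _ = (1/2:ℝ)^(m+1) * ∑' ℓ : ℕ, ((1/2:ℝ))^(ℓ+1) := tsum_mul_left
    _ = (1/2:ℝ)^(m+1) := by rw [geom_succ_tsum, mul_one]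

lemma wtri_summable : Summable (wtri c) := by
  apply (summable_prod_of_nonneg (wtri_nonneg c)).mpr
  refine ⟨fun m => ?_, ?_⟩
  · exact wtri_pair_summable c m
  · exact Summable.of_nonneg_of_le
      (fun m => tsum_nonneg (fun p => wtri_nonneg c (m, p)))
      (wtri_pair_tsum_le c) geom_succ_summable

lemma wtri_tsum_le : (∑' j, wtri c j) ≤ 1 := by
  rw [Summable.tsum_prod' (wtri_summable c) (fun m => wtri_pair_summable c m)]
  calc (∑' m, ∑' p : ℕ × ℕ, wtri c (m, p)) ≤ ∑' m : ℕ, ((1/2:ℝ))^(m+1) :=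
        Summable.tsum_le_tsum (wtri_pair_tsum_le c)
          ((summable_prod_of_nonneg (wtri_nonneg c)).mp (wtri_summable c) |>.2)
          geom_succ_summable
    _ = 1 := geom_succ_tsum

lemma wtri_pos {m ℓ i : ℕ} (h : i < c m ℓ) : 0 < wtri c (m, ℓ, i) := by
  have hc : 0 < c m ℓ := lt_of_le_of_lt (Nat.zero_le i) h
  unfold wtri
  simp only [h, if_true]
  have : (0:ℝ) < c m ℓ := by exact_mod_cast hc
  positivity

lemma wtri_neg_log {m ℓ i : ℕ} (h : i < c m ℓ) :
    -Real.log (wtri c (m, ℓ, i)) =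
      (m+1) * Real.log 2 + (ℓ+1) * Real.log 2 + Real.log (c m ℓ) := by
  have hc : 0 < c m ℓ := lt_of_le_of_lt (Nat.zero_le i) h
  have hc' : (c m ℓ : ℝ) ≠ 0 := by exact_mod_cast hc.ne'
  unfold wtri
  simp only [h, if_true]
  rw [Real.log_div (by positivity) hc', Real.log_mul (by positivity) (by positivity),
    Real.log_pow, Real.log_pow]
  have : Real.log (1/2) = -Real.log 2 := by
    rw [one_div, Real.log_inv]
  rw [this]
  push_cast
  ring
end wtri_props

lemma exists_min_net {E : Type*} [MetricSpace E] {K : Set E} (hK : IsCompact K)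
    {δ : ℝ} (hδ : 0 < δ) :
    ∃ S : Finset E, ↑S ⊆ K ∧ S.card = coveringNumber K δ ∧
      ∀ a ∈ K, ∃ b ∈ S, dist a b ≤ δ := by
  classical
  have htb := hK.totallyBounded
  rw [totallyBounded_iff_subset] at htb
  obtain ⟨t, htK, htfin, hcov⟩ := htb _ (Metric.dist_mem_uniformity hδ)
  have hmem : (coveringNumber K δ) ∈
      {n : ℕ | ∃ S : Finset E, ↑S ⊆ K ∧ S.card = n ∧ ∀ a ∈ K, ∃ b ∈ S, dist a b ≤ δ} := by
    apply Nat.sInf_mem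
    refine ⟨htfin.toFinset.card, htfin.toFinset, ?_, rfl, ?_⟩
    · intro b hb
      simp only [Set.Finite.coe_toFinset] at hb
      exact htK hb
    · intro a ha
      obtain ⟨b, hb, hab⟩ := Set.mem_iUnion₂.mp (hcov ha)
      exact ⟨b, htfin.mem_toFinset.mpr hb, le_of_lt hab⟩
  exact hmem

lemma log_covNum {E : Type*} [MetricSpace E] (A : Set E) (ε : ℝ) :
    Real.log (coveringNumber A ε) = metricEntropy A ε * Real.log 2 := by
  rw [metricEntropy, Real.logb]
  field_simp

open Filter




set_option maxHeartbeats 1000000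
/-- Corollary 8: for a Banach space `𝓕` compactly embedded in `C(X)` whose unit ball
satisfies `L = limsup_{ε→0} H_ε(U_𝓕)·ε^γ ∈ (0,∞)`, the regret is
`O(L^{1/(γ+1)} φ^{γ/(γ+1)} N^{γ/(γ+1)})` where `φ = 2 max(1, ‖F‖_𝓕)`. -/
theorem stmt12 : ∃ C : ℝ, 0 < C ∧
    ∀ (X : Type u) [MetricSpace X] [CompactSpace X]
      (𝓕 : Type v) [NormedAddCommGroup 𝓕] [NormedSpace ℝ 𝓕] [CompleteSpace 𝓕]
      (ι : 𝓕 →ₗ[ℝ] C(X, ℝ)) (γ L : ℝ),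
      0 < γ →
      Function.Injective ι →
      IsCompact (⇑ι '' Metric.closedBall (0 : 𝓕) 1) →
      Filter.IsBoundedUnder (· ≤ ·) (nhdsWithin 0 (Set.Ioi 0))
        (fun ε : ℝ => metricEntropy (⇑ι '' Metric.closedBall (0 : 𝓕) 1) ε * ε ^ γ) →
      L = Filter.limsup
            (fun ε : ℝ => metricEntropy (⇑ι '' Metric.closedBall (0 : 𝓕) 1) ε * ε ^ γ)
            (nhdsWithin 0 (Set.Ioi 0)) →
      0 < L →
      ∃ σ : List (X × ℝ) → X → ℝ,
        ∀ x : ℕ → X, ∀ y : ℕ → ℝ, (∀ n, y n ∈ Set.Icc (-1 : ℝ) 1) →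
          ∀ f : 𝓕, ∃ N₀ : ℕ, ∀ N ≥ N₀,
            ∑ n ∈ Finset.range N, (y n - preds σ x y n) ^ 2 ≤
              ∑ n ∈ Finset.range N, (y n - ι f (x n)) ^ 2 +
                C * L ^ (1 / (γ + 1)) * (2 * max 1 ‖f‖) ^ (γ / (γ + 1)) *
                  (N : ℝ) ^ (γ / (γ + 1)) := by
  classical
  refine ⟨300, by norm_num, ?_⟩
  intro X _ _ 𝓕 _ _ _ ι γ L hγ hinj hKcomp hbdd hLdef hLpos
  set K : Set C(X,ℝ) := ⇑ι '' Metric.closedBall (0:𝓕) 1 with hKdef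
  -- eventual entropy bound
  have hev : ∀ᶠ ε in nhdsWithin 0 (Set.Ioi 0),
      metricEntropy K ε * ε ^ γ < 2*L := by
    apply Filter.eventually_lt_of_limsup_lt _ hbdd
    rw [← hLdef]; linarith
  obtain ⟨ε₀, hε₀pos, hε₀⟩ : ∃ ε₀ > 0, ∀ ε : ℝ, 0 < ε → ε < ε₀ →
      metricEntropy K ε * ε ^ γ < 2*L := by
    rw [eventually_nhdsWithin_iff, Metric.eventually_nhds_iff] at hev
    obtain ⟨ε₀, h1, h2⟩ := hev
    refine ⟨ε₀, h1, fun ε hε1 hε2 => ?_⟩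
    exact h2 (by simpa [Real.dist_eq, abs_of_pos hε1] using hε2) hε1
  -- parameters
  have hγ1 : (0:ℝ) < γ + 1 := by linarith
  set p : ℝ := γ / (γ + 1) with hpdef
  set pc : ℝ := 1 / (γ + 1) with hpcdef
  have hp : 0 < p := div_pos hγ hγ1
  have hpc : 0 < pc := div_pos one_pos hγ1
  have hp1 : p ≤ 1 := by rw [hpdef, div_le_one hγ1]; linarith
  have hpc1 : pc ≤ 1 := by rw [hpcdef, div_le_one hγ1]; linarith
  have hppc : p + pc = 1 := by rw [hpdef, hpcdef]; field_simp
  set q : ℕ := max 1 ⌈γ⌉₊ with hqdef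
  have hq0 : (0:ℝ) < q := by
    have : 1 ≤ q := le_max_left _ _
    exact_mod_cast Nat.lt_of_lt_of_le Nat.zero_lt_one this
  have hγq : γ ≤ q := by
    refine le_trans (Nat.le_ceil γ) ?_
    exact_mod_cast le_max_right 1 ⌈γ⌉₊
  -- scales
  set s : ℕ → ℝ := fun ℓ => (2:ℝ)^((ℓ:ℝ)/q) with hsdef
  have hs_pos : ∀ ℓ, 0 < s ℓ := fun ℓ => Real.rpow_pos_of_pos (by norm_num) _
  set δsc : ℕ → ℕ → ℝ := fun m ℓ => (((m:ℝ)+1) * s ℓ)⁻¹ with hδdef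
  have hδpos : ∀ m ℓ, 0 < δsc m ℓ := by
    intro m ℓ
    have := hs_pos ℓ
    rw [hδdef]
    positivity
  -- minimal nets of K
  have hnet : ∀ m ℓ : ℕ, ∃ S : Finset C(X,ℝ), ↑S ⊆ K ∧
      S.card = coveringNumber K (δsc m ℓ) ∧ ∀ a ∈ K, ∃ b ∈ S, dist a b ≤ δsc m ℓ :=
    fun m ℓ => exists_min_net hKcomp (hδpos m ℓ)
  choose S hS1 hS2 hS3 using hnet
  -- experts
  set T : ℕ → ℕ → Finset C(X,ℝ) :=
    fun m ℓ => (S m ℓ).image (fun g => ((m:ℝ)+1) • g) with hTdef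
  set c : ℕ → ℕ → ℕ := fun m ℓ => (T m ℓ).toList.length with hcdef
  set G : ℕ×ℕ×ℕ → C(X,ℝ) := fun j => (T j.1 j.2.1).toList.getD j.2.2 0 with hGdef
  set P : ℕ×ℕ×ℕ → X → ℝ := fun j z => clmp (G j z) with hPdef
  set w : ℕ×ℕ×ℕ → ℝ := wtri c with hwdef
  have hw0 : ∀ j, 0 ≤ w j := wtri_nonneg c
  have hwsum : Summable w := wtri_summable c
  have hwtot : (∑' j, w j) ≤ 1 := wtri_tsum_le c
  have hPb : ∀ j z, |P j z| ≤ 1 := fun j z => clmp_mem _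
  refine ⟨aaS w P, ?_⟩
  intro x y hy f
  have hy' : ∀ n, |y n| ≤ 1 := by
    intro n
    rw [abs_le]
    exact ⟨(hy n).1, (hy n).2⟩
  -- the competitor's scale
  set m : ℕ := ⌈‖f‖⌉₊ with hmdef
  have hm1 : (0:ℝ) < (m:ℝ)+1 := by positivity
  have hfm : ‖f‖ ≤ (m:ℝ)+1 := by
    have h := Nat.le_ceil ‖f‖
    rw [← hmdef] at h
    linarith
  have hball : ι (((m:ℝ)+1)⁻¹ • f) ∈ K := by
    refine ⟨((m:ℝ)+1)⁻¹ • f, ?_, rfl⟩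
    rw [Metric.mem_closedBall, dist_zero_right, norm_smul, norm_inv, Real.norm_eq_abs,
      abs_of_pos hm1]
    rw [inv_mul_le_iff₀ hm1]
    linarith
  -- approximation at each scale ℓ
  have happrox : ∀ ℓ : ℕ, ∃ i, i < c m ℓ ∧ ‖(ι f : C(X,ℝ)) - G (m, ℓ, i)‖ ≤ (s ℓ)⁻¹ := by
    intro ℓ
    obtain ⟨b, hbS, hbd⟩ := hS3 m ℓ _ hball
    have hgT : ((m:ℝ)+1) • b ∈ T m ℓ := Finset.mem_image_of_mem _ hbS
    have hgl : ((m:ℝ)+1) • b ∈ (T m ℓ).toList := Finset.mem_toList.mpr hgT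
    obtain ⟨i, hilen, hig⟩ := List.mem_iff_getElem.mp hgl
    refine ⟨i, hilen, ?_⟩
    have hGi : G (m, ℓ, i) = ((m:ℝ)+1) • b := by
      rw [hGdef]
      simp only
      rw [List.getD_eq_getElem _ _ hilen, hig]
    have hιf : (ι f : C(X,ℝ)) = ((m:ℝ)+1) • ι (((m:ℝ)+1)⁻¹ • f) := by
      rw [map_smul, smul_smul, mul_inv_cancel₀ (ne_of_gt hm1), one_smul]
    rw [hGi, hιf, ← smul_sub, norm_smul, Real.norm_eq_abs, abs_of_pos hm1, ← dist_eq_norm]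
    calc ((m:ℝ)+1) * dist (ι (((m:ℝ)+1)⁻¹ • f)) b ≤ ((m:ℝ)+1) * δsc m ℓ :=
          mul_le_mul_of_nonneg_left hbd (le_of_lt hm1)
      _ = (s ℓ)⁻¹ := by
          rw [hδdef]
          field_simp
  -- the master regret bound, for each scale ℓ, N, provided δsc m ℓ < ε₀
  have master : ∀ ℓ N : ℕ, δsc m ℓ < ε₀ →
      ∑ n ∈ Finset.range N, (y n - preds (aaS w P) x y n)^2 ≤
        (∑ n ∈ Finset.range N, (y n - ι f (x n))^2) + 4*N*(s ℓ)⁻¹ +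
          8*Real.log 2*((m:ℝ)+(ℓ:ℝ)+2) + 16*Real.log 2*L*(((m:ℝ)+1) * s ℓ)^γ := by
    intro ℓ N hδsmall
    obtain ⟨i, hic, hnorm⟩ := happrox ℓ
    have hj : 0 < w (m, ℓ, i) := wtri_pos c hic
    have haa := aa_main w P hw0 hwsum hwtot hPb x y hy' (m, ℓ, i) hj N
    -- loss comparison
    have hcmp : (∑ n ∈ Finset.range N, (y n - P (m,ℓ,i) (x n))^2) ≤
        (∑ n ∈ Finset.range N, (y n - ι f (x n))^2) + 4*N*(s ℓ)⁻¹ := by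
      have hpt : ∀ n, (y n - P (m,ℓ,i) (x n))^2 ≤ (y n - ι f (x n))^2 + 4*(s ℓ)⁻¹ := by
        intro n
        have hzn : |(ι f : C(X,ℝ)) (x n) - G (m,ℓ,i) (x n)| ≤ (s ℓ)⁻¹ := by
          have h1 := ContinuousMap.norm_coe_le_norm ((ι f : C(X,ℝ)) - G (m,ℓ,i)) (x n)
          simp only [ContinuousMap.sub_apply, Real.norm_eq_abs] at h1
          exact le_trans h1 hnorm
        exact clmp_cmp (hy' n) hzn
      calc (∑ n ∈ Finset.range N, (y n - P (m,ℓ,i) (x n))^2)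
          ≤ ∑ n ∈ Finset.range N, ((y n - ι f (x n))^2 + 4*(s ℓ)⁻¹) :=
            Finset.sum_le_sum (fun n _ => hpt n)
        _ = (∑ n ∈ Finset.range N, (y n - ι f (x n))^2) + 4*N*(s ℓ)⁻¹ := by
            rw [Finset.sum_add_distrib, Finset.sum_const, Finset.card_range, nsmul_eq_mul]
            ring
    -- weight bound
    have hwlog : -Real.log (w (m,ℓ,i)) =
        ((m:ℝ)+1) * Real.log 2 + ((ℓ:ℝ)+1) * Real.log 2 + Real.log (c m ℓ) := by
      have := wtri_neg_log c hic
      rw [hwdef]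
      push_cast at this ⊢
      linarith [this]
    have hc1 : 1 ≤ c m ℓ := Nat.pos_of_ne_zero (by intro h; rw [h] at hic; exact Nat.not_lt_zero _ hic)
    have hcov : (c m ℓ : ℝ) ≤ (coveringNumber K (δsc m ℓ) : ℝ) := by
      have h1 : c m ℓ = (T m ℓ).card := (Finset.length_toList _)
      have h2 : (T m ℓ).card ≤ (S m ℓ).card := Finset.card_image_le
      rw [h1]
      exact_mod_cast le_trans h2 (le_of_eq (hS2 m ℓ))
    have hlogc : Real.log (c m ℓ) ≤ 2*L*(((m:ℝ)+1) * s ℓ)^γ * Real.log 2 := by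
      have h1 : Real.log (c m ℓ) ≤ Real.log (coveringNumber K (δsc m ℓ)) :=
        Real.log_le_log (by exact_mod_cast hc1) hcov
      rw [log_covNum] at h1
      have hent : metricEntropy K (δsc m ℓ) ≤ 2*L*(((m:ℝ)+1) * s ℓ)^γ := by
        have h2 := hε₀ (δsc m ℓ) (hδpos m ℓ) hδsmall
        have hmulpos : (0:ℝ) < ((m:ℝ)+1) * s ℓ := by
          have := hs_pos ℓ
          positivity
        have hR : (0:ℝ) < (((m:ℝ)+1) * s ℓ)^γ := Real.rpow_pos_of_pos hmulpos _
        have h4 : (δsc m ℓ)^γ = ((((m:ℝ)+1) * s ℓ)^γ)⁻¹ := by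
          simp only [hδdef]
          rw [Real.inv_rpow (le_of_lt hmulpos)]
        rw [h4] at h2
        have h6 := mul_lt_mul_of_pos_right h2 hR
        rw [mul_assoc, inv_mul_cancel₀ (ne_of_gt hR), mul_one] at h6
        linarith
      calc Real.log (c m ℓ) ≤ metricEntropy K (δsc m ℓ) * Real.log 2 := h1
        _ ≤ 2*L*(((m:ℝ)+1) * s ℓ)^γ * Real.log 2 :=
            mul_le_mul_of_nonneg_right hent (Real.log_nonneg (by norm_num))
    have hlog2 : (0:ℝ) ≤ Real.log 2 := Real.log_nonneg (by norm_num)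
    calc ∑ n ∈ Finset.range N, (y n - preds (aaS w P) x y n)^2
        ≤ (∑ n ∈ Finset.range N, (y n - P (m,ℓ,i) (x n))^2) - 8 * Real.log (w (m,ℓ,i)) :=
          haa
      _ ≤ ((∑ n ∈ Finset.range N, (y n - ι f (x n))^2) + 4*N*(s ℓ)⁻¹) +
            8 * (((m:ℝ)+1) * Real.log 2 + ((ℓ:ℝ)+1) * Real.log 2 + Real.log (c m ℓ)) := by
          have : -(8 : ℝ) * Real.log (w (m,ℓ,i)) =
              8 * (((m:ℝ)+1) * Real.log 2 + ((ℓ:ℝ)+1) * Real.log 2 + Real.log (c m ℓ)) := by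
            rw [← hwlog]; ring
          linarith [hcmp]
      _ ≤ (∑ n ∈ Finset.range N, (y n - ι f (x n))^2) + 4*N*(s ℓ)⁻¹ +
            8*Real.log 2*((m:ℝ)+(ℓ:ℝ)+2) + 16*Real.log 2*L*(((m:ℝ)+1) * s ℓ)^γ := by
          have hexp : 8*(((m:ℝ)+1) * Real.log 2 + ((ℓ:ℝ)+1) * Real.log 2 +
              Real.log (c m ℓ)) = 8*Real.log 2*((m:ℝ)+(ℓ:ℝ)+2) + 8*Real.log (c m ℓ) := by
            ring
          linarith [hlogc, hexp]
  -- ===== endgame: choose the scale per horizon =====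
  have hlog2pos : (0:ℝ) < Real.log 2 := Real.log_pos (by norm_num)
  have hφ1 : (1:ℝ) ≤ max 1 ‖f‖ := le_max_left _ _
  have hφpos : (0:ℝ) < 2 * max 1 ‖f‖ := by linarith
  set φ : ℝ := 2 * max 1 ‖f‖ with hφdef
  set D : ℝ := L^pc * φ^p with hDdef
  have hD : 0 < D := mul_pos (Real.rpow_pos_of_pos hLpos _) (Real.rpow_pos_of_pos hφpos _)
  have hmp : (0:ℝ) < ((m:ℝ)+1)^γ := Real.rpow_pos_of_pos hm1 _
  set B : ℝ := 16*Real.log 2*L*((m:ℝ)+1)^γ with hBdef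
  have hB : 0 < B := by
    have : (0:ℝ) < 16*Real.log 2 := by linarith
    exact mul_pos (mul_pos this hLpos) hmp
  set t : ℕ → ℝ := fun N => (4*(N:ℝ)/B)^pc with htdef
  set ℓf : ℕ → ℕ := fun N => ⌈(q:ℝ) * Real.logb 2 (t N)⌉₊ with hℓfdef
  set b1 : ℝ := 8*Real.log 2*((m:ℝ)+3) + 8*(q:ℝ)*pc*(3+|Real.log B|) with hb1def
  set b2 : ℝ := 8*(q:ℝ)*pc with hb2def
  have hb2 : 0 < b2 := by
    rw [hb2def]
    positivity
  -- tendsto facts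
  have htend : Filter.Tendsto t Filter.atTop Filter.atTop := by
    have h1 : Filter.Tendsto (fun z : ℝ => 4*z/B) Filter.atTop Filter.atTop :=
      (Filter.tendsto_id.const_mul_atTop (by norm_num : (0:ℝ) < 4)).atTop_div_const hB
    have h2 : Filter.Tendsto (fun z : ℝ => z ^ pc) Filter.atTop Filter.atTop :=
      tendsto_rpow_atTop hpc
    exact h2.comp (h1.comp tendsto_natCast_atTop_atTop)
  have hE1 : ∀ᶠ N : ℕ in Filter.atTop, 1 ≤ t N := htend.eventually_ge_atTop 1
  have hE2 : ∀ᶠ N : ℕ in Filter.atTop, ε₀⁻¹ * ((m:ℝ)+1)⁻¹ < t N :=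
    htend.eventually_gt_atTop _
  have hE3 : ∀ᶠ N : ℕ in Filter.atTop, b1 + b2*Real.log N ≤ 84*D*(N:ℝ)^p := by
    have hev1 : ∀ᶠ z : ℝ in Filter.atTop, b2 * Real.log z ≤ 42*D*z^p := by
      have hlo := isLittleO_log_rpow_atTop hp
      have hdef := hlo.def (show (0:ℝ) < 42*D/b2 by positivity)
      filter_upwards [hdef, Filter.eventually_ge_atTop (1:ℝ)] with z hz hz1
      have hzp : (0:ℝ) ≤ z^p := Real.rpow_nonneg (by linarith) p
      rw [Real.norm_eq_abs, Real.norm_eq_abs, abs_of_nonneg (Real.log_nonneg hz1),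
        abs_of_nonneg hzp] at hz
      calc b2 * Real.log z ≤ b2 * (42*D/b2 * z^p) :=
            mul_le_mul_of_nonneg_left hz (le_of_lt hb2)
        _ = 42*D*z^p := by field_simp
    have hev2 : ∀ᶠ z : ℝ in Filter.atTop, b1 ≤ 42*D*z^p := by
      have h2 : Filter.Tendsto (fun z : ℝ => 42*D*z^p) Filter.atTop Filter.atTop :=
        (tendsto_rpow_atTop hp).const_mul_atTop (by positivity)
      exact h2.eventually_ge_atTop b1
    have hev3 : ∀ᶠ z : ℝ in Filter.atTop, b1 + b2*Real.log z ≤ 84*D*z^p := by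
      filter_upwards [hev1, hev2] with z h1 h2
      linarith
    exact tendsto_natCast_atTop_atTop.eventually hev3
  have hE4 : ∀ᶠ N : ℕ in Filter.atTop, 1 ≤ N := Filter.eventually_ge_atTop 1
  obtain ⟨N₀, hN₀⟩ := Filter.eventually_atTop.mp (((hE1.and hE2).and (hE3.and hE4)))
  refine ⟨N₀, ?_⟩
  intro N hN
  obtain ⟨⟨h1t, h2t⟩, h3t, h4N⟩ := hN₀ N hN
  have hN0 : (0:ℝ) < N := by exact_mod_cast h4N
  have hA : (0:ℝ) < 4*(N:ℝ) := by linarith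
  have htN : 0 < t N := lt_of_lt_of_le one_pos h1t
  set ℓ := ℓf N with hℓdef2
  have hsl := hs_pos ℓ
  have hlogbnn : 0 ≤ Real.logb 2 (t N) := Real.logb_nonneg (by norm_num) h1t
  have hqlog : 0 ≤ (q:ℝ) * Real.logb 2 (t N) := mul_nonneg (le_of_lt hq0) hlogbnn
  -- bounds on the chosen scale
  have hslb : t N ≤ s ℓ := by
    have hle : (q:ℝ) * Real.logb 2 (t N) ≤ (ℓ:ℝ) := by
      rw [hℓdef2, hℓfdef]
      exact Nat.le_ceil _
    have hle2 : Real.logb 2 (t N) ≤ (ℓ:ℝ)/(q:ℝ) := by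
      rw [le_div_iff₀ hq0]
      linarith [hle]
    calc t N = (2:ℝ) ^ (Real.logb 2 (t N)) :=
          (Real.rpow_logb (by norm_num) (by norm_num) htN).symm
      _ ≤ (2:ℝ) ^ ((ℓ:ℝ)/(q:ℝ)) :=
          Real.rpow_le_rpow_of_exponent_le (by norm_num) hle2
      _ = s ℓ := rfl
  have hsub : s ℓ ≤ (2:ℝ)^((1:ℝ)/(q:ℝ)) * t N := by
    have hlt : (ℓ:ℝ) < (q:ℝ) * Real.logb 2 (t N) + 1 := by
      rw [hℓdef2, hℓfdef]
      exact Nat.ceil_lt_add_one hqlog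
    have hle2 : (ℓ:ℝ)/(q:ℝ) ≤ Real.logb 2 (t N) + 1/(q:ℝ) := by
      rw [div_le_iff₀ hq0]
      have : (Real.logb 2 (t N) + 1/(q:ℝ)) * (q:ℝ)
          = (q:ℝ) * Real.logb 2 (t N) + 1 := by
        field_simp
      rw [this]
      linarith [hlt]
    calc s ℓ = (2:ℝ) ^ ((ℓ:ℝ)/(q:ℝ)) := rfl
      _ ≤ (2:ℝ) ^ (Real.logb 2 (t N) + 1/(q:ℝ)) :=
          Real.rpow_le_rpow_of_exponent_le (by norm_num) hle2
      _ = (2:ℝ)^(Real.logb 2 (t N)) * (2:ℝ)^((1:ℝ)/(q:ℝ)) := by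
          rw [← Real.rpow_add (by norm_num)]
      _ = (2:ℝ)^((1:ℝ)/(q:ℝ)) * t N := by
          rw [Real.rpow_logb (by norm_num) (by norm_num) htN]
          ring
  -- the chosen scale is small enough
  have hδsmall : δsc m ℓ < ε₀ := by
    have hgt : ε₀⁻¹ < ((m:ℝ)+1) * s ℓ := by
      have h' : ε₀⁻¹ * ((m:ℝ)+1)⁻¹ < s ℓ := lt_of_lt_of_le h2t hslb
      calc ε₀⁻¹ = ((m:ℝ)+1) * (ε₀⁻¹ * ((m:ℝ)+1)⁻¹) := by
            field_simp
          _ < ((m:ℝ)+1) * s ℓ := by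
            exact mul_lt_mul_of_pos_left h' hm1
    have hδval : δsc m ℓ = (((m:ℝ)+1) * s ℓ)⁻¹ := rfl
    rw [hδval, inv_lt_comm₀ (by positivity) hε₀pos]
    exact hgt
  refine le_trans (master ℓ N hδsmall) ?_
  -- ===== rpow computations =====
  have hANp : (0:ℝ) < (4*(N:ℝ))^p := Real.rpow_pos_of_pos hA _
  have hBpc : (0:ℝ) < B^pc := Real.rpow_pos_of_pos hB _
  have h1mp : 1 - pc = p := by linarith
  have h1mpc : 1 - p = pc := by linarith
  -- t N in closed form
  have htval : t N = (4*(N:ℝ))^pc / B^pc := by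
    rw [htdef]
    simp only
    rw [Real.div_rpow (by positivity) (le_of_lt hB)]
  have e1 : (4*(N:ℝ))^p * B^pc * t N = 4*(N:ℝ) := by
    have hre : (4*(N:ℝ))^p * B^pc * ((4*(N:ℝ))^pc / B^pc)
        = (4*(N:ℝ))^p * (4*(N:ℝ))^pc * (B^pc / B^pc) := by
      ring
    rw [htval, hre, div_self (ne_of_gt hBpc), mul_one, ← Real.rpow_add hA, hppc,
      Real.rpow_one]
  have hterm1 : 4*(N:ℝ)*(s ℓ)⁻¹ ≤ (4*(N:ℝ))^p * B^pc := by
    have hinv : (s ℓ)⁻¹ ≤ (t N)⁻¹ := by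
      apply inv_anti₀ htN hslb
    calc 4*(N:ℝ)*(s ℓ)⁻¹ ≤ 4*(N:ℝ)*(t N)⁻¹ :=
          mul_le_mul_of_nonneg_left hinv (by positivity)
      _ = (4*(N:ℝ))^p * B^pc := by
          field_simp [ne_of_gt htN]
          linarith [e1]
  have hγqle : γ/(q:ℝ) ≤ 1 := by
    rw [div_le_one hq0]
    exact hγq
  have htγ : (t N)^γ = (4*(N:ℝ)/B)^p := by
    rw [htdef]
    simp only
    rw [← Real.rpow_mul (by positivity)]
    congr 1
    rw [hpcdef, hpdef]
    ring
  have hterm3 : 16*Real.log 2*L*(((m:ℝ)+1) * s ℓ)^γ ≤ 2 * ((4*(N:ℝ))^p * B^pc) := by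
    have hms : (((m:ℝ)+1) * s ℓ)^γ = ((m:ℝ)+1)^γ * (s ℓ)^γ :=
      Real.mul_rpow (le_of_lt hm1) (le_of_lt hsl)
    have hsγ : (s ℓ)^γ ≤ 2 * (t N)^γ := by
      calc (s ℓ)^γ ≤ ((2:ℝ)^((1:ℝ)/(q:ℝ)) * t N)^γ :=
            Real.rpow_le_rpow (le_of_lt hsl) hsub (le_of_lt hγ)
        _ = ((2:ℝ)^((1:ℝ)/(q:ℝ)))^γ * (t N)^γ :=
            Real.mul_rpow (by positivity) (le_of_lt htN)
        _ ≤ 2 * (t N)^γ := by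
            have h2q : ((2:ℝ)^((1:ℝ)/(q:ℝ)))^γ ≤ 2 := by
              rw [← Real.rpow_mul (by norm_num : (0:ℝ) ≤ 2)]
              calc (2:ℝ)^((1:ℝ)/(q:ℝ)*γ) ≤ (2:ℝ)^(1:ℝ) := by
                    apply Real.rpow_le_rpow_of_exponent_le (by norm_num)
                    rw [div_mul_eq_mul_div, one_mul]
                    rw [div_le_one hq0]
                    exact hγq
                _ = 2 := Real.rpow_one 2
            exact mul_le_mul_of_nonneg_right h2q
              (le_of_lt (Real.rpow_pos_of_pos htN γ))
    have hBid : B^pc = B / B^p := by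
      rw [← h1mpc, Real.rpow_sub hB, Real.rpow_one]
    have hBp : (0:ℝ) < B^p := Real.rpow_pos_of_pos hB _
    calc 16*Real.log 2*L*(((m:ℝ)+1) * s ℓ)^γ = B * (s ℓ)^γ := by
          rw [hms, hBdef]
          ring
      _ ≤ B * (2*(t N)^γ) := by
          apply mul_le_mul_of_nonneg_left hsγ (le_of_lt hB)
      _ = 2 * ((4*(N:ℝ))^p * B^pc) := by
          rw [htγ, Real.div_rpow (by positivity) (le_of_lt hB), hBid]
          field_simp
  -- main term assembled
  have h4p : (4*(N:ℝ))^p ≤ 4 * (N:ℝ)^p := by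
    rw [Real.mul_rpow (by norm_num) (le_of_lt hN0)]
    have h4ple : (4:ℝ)^p ≤ 4 := by
      calc (4:ℝ)^p ≤ (4:ℝ)^(1:ℝ) :=
            Real.rpow_le_rpow_of_exponent_le (by norm_num) hp1
        _ = 4 := Real.rpow_one 4
    exact mul_le_mul_of_nonneg_right h4ple (Real.rpow_nonneg (le_of_lt hN0) _)
  have hγpc : γ * pc = p := by
    rw [hpcdef, hpdef]
    ring
  have hB12 : B^pc ≤ 12 * (L^pc * ((m:ℝ)+1)^p) := by
    have hBsplit : B^pc = (16*Real.log 2)^pc * L^pc * ((m:ℝ)+1)^p := by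
      rw [hBdef, Real.mul_rpow (by positivity) (le_of_lt hmp),
        Real.mul_rpow (by positivity) (le_of_lt hLpos),
        ← Real.rpow_mul (le_of_lt hm1), hγpc]
    have h16 : (16*Real.log 2)^pc ≤ 12 := by
      have hge1 : (1:ℝ) ≤ 16*Real.log 2 := by
        have := Real.log_two_gt_d9
        linarith
      calc (16*Real.log 2)^pc ≤ (16*Real.log 2)^(1:ℝ) :=
            Real.rpow_le_rpow_of_exponent_le hge1 hpc1
        _ = 16*Real.log 2 := Real.rpow_one _
        _ ≤ 12 := by
            have := Real.log_two_lt_d9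
            linarith
    rw [hBsplit, mul_assoc]
    exact mul_le_mul_of_nonneg_right h16 (by positivity)
  have hm32 : ((m:ℝ)+1)^p ≤ (3/2) * φ^p := by
    have hmceil : (m:ℝ) < ‖f‖ + 1 := by
      have h := Nat.ceil_lt_add_one (norm_nonneg f)
      rw [← hmdef] at h
      exact h
    have hm3 : (m:ℝ)+1 ≤ (3/2)*φ := by
      have h1 : ‖f‖ ≤ max 1 ‖f‖ := le_max_right _ _
      rw [hφdef]
      linarith
    calc ((m:ℝ)+1)^p ≤ ((3/2)*φ)^p :=
          Real.rpow_le_rpow (le_of_lt hm1) hm3 (le_of_lt hp)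
      _ = (3/2:ℝ)^p * φ^p := Real.mul_rpow (by norm_num) (le_of_lt hφpos)
      _ ≤ (3/2) * φ^p := by
          have h32 : (3/2:ℝ)^p ≤ 3/2 := by
            calc (3/2:ℝ)^p ≤ (3/2:ℝ)^(1:ℝ) :=
                  Real.rpow_le_rpow_of_exponent_le (by norm_num) hp1
              _ = 3/2 := Real.rpow_one _
          exact mul_le_mul_of_nonneg_right h32 (Real.rpow_nonneg (le_of_lt hφpos) _)
  have hmain : 3*((4*(N:ℝ))^p * B^pc) ≤ 216 * D * (N:ℝ)^p := by
    have step1 : (4*(N:ℝ))^p * B^pc ≤ (4*(N:ℝ)^p) * B^pc :=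
      mul_le_mul_of_nonneg_right h4p (le_of_lt hBpc)
    have step2 : (4*(N:ℝ)^p) * B^pc ≤ (4*(N:ℝ)^p) * (12*(L^pc*((m:ℝ)+1)^p)) :=
      mul_le_mul_of_nonneg_left hB12 (by positivity)
    have step3 : L^pc*((m:ℝ)+1)^p ≤ L^pc*((3/2)*φ^p) :=
      mul_le_mul_of_nonneg_left hm32 (Real.rpow_nonneg (le_of_lt hLpos) _)
    have step4 : (4*(N:ℝ)^p) * (12*(L^pc*((m:ℝ)+1)^p)) ≤
        (4*(N:ℝ)^p) * (12*(L^pc*((3/2)*φ^p))) := by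
      apply mul_le_mul_of_nonneg_left _ (by positivity)
      exact mul_le_mul_of_nonneg_left step3 (by norm_num)
    have step5 : 3*((4*(N:ℝ)^p) * (12*(L^pc*((3/2)*φ^p)))) = 216 * D * (N:ℝ)^p := by
      rw [hDdef]
      ring
    linarith
  -- minor term
  have hlt : (ℓ:ℝ) < (q:ℝ) * Real.logb 2 (t N) + 1 := by
    rw [hℓdef2, hℓfdef]
    exact Nat.ceil_lt_add_one hqlog
  have hminor : 8*Real.log 2*((m:ℝ)+(ℓ:ℝ)+2) ≤ 84*D*(N:ℝ)^p := by
    have hlogb_eq : Real.logb 2 (t N) = pc * Real.logb 2 (4*(N:ℝ)/B) := by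
      rw [htdef]
      simp only
      exact Real.logb_rpow_eq_mul_logb_of_pos (by positivity)
    have hnum : Real.log (4*(N:ℝ)/B) ≤ 3 + |Real.log B| + Real.log N := by
      rw [Real.log_div (by positivity) (ne_of_gt hB),
        Real.log_mul (by norm_num) (ne_of_gt hN0)]
      have h4 : Real.log 4 ≤ 3 := by
        linarith [Real.log_le_sub_one_of_pos (show (0:ℝ) < 4 by norm_num)]
      have hBabs : -Real.log B ≤ |Real.log B| := neg_le_abs _
      linarith
    have hlogB : Real.logb 2 (4*(N:ℝ)/B) ≤
        (3 + |Real.log B| + Real.log N)/Real.log 2 := by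
      rw [Real.logb, div_eq_mul_inv, div_eq_mul_inv]
      exact mul_le_mul_of_nonneg_right hnum (by positivity)
    have h5 : Real.logb 2 (t N) ≤ pc*((3+|Real.log B|+Real.log N)/Real.log 2) := by
      rw [hlogb_eq]
      exact mul_le_mul_of_nonneg_left hlogB (le_of_lt hpc)
    have hℓle : (ℓ:ℝ) ≤ (q:ℝ)*(pc*((3 + |Real.log B| + Real.log N)/Real.log 2)) + 1 := by
      have h6 := mul_le_mul_of_nonneg_left h5 (le_of_lt hq0)
      linarith
    have hsimp : 8*Real.log 2*((q:ℝ)*(pc*((3+|Real.log B|+Real.log N)/Real.log 2)) + 1)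
        = 8*(q:ℝ)*pc*(3+|Real.log B|+Real.log N) + 8*Real.log 2 := by
      field_simp
    have h9 : 8*Real.log 2*(ℓ:ℝ) ≤
        8*(q:ℝ)*pc*(3+|Real.log B|+Real.log N) + 8*Real.log 2 := by
      calc 8*Real.log 2*(ℓ:ℝ)
          ≤ 8*Real.log 2*((q:ℝ)*(pc*((3+|Real.log B|+Real.log N)/Real.log 2)) + 1) :=
            mul_le_mul_of_nonneg_left hℓle (by positivity)
        _ = 8*(q:ℝ)*pc*(3+|Real.log B|+Real.log N) + 8*Real.log 2 := hsimp
    have hb1b2 : 8*Real.log 2*((m:ℝ)+(ℓ:ℝ)+2) ≤ b1 + b2*Real.log N := by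
      rw [hb1def, hb2def]
      have hexpand : 8*Real.log 2*((m:ℝ)+(ℓ:ℝ)+2)
          = 8*Real.log 2*(m:ℝ) + 8*Real.log 2*(ℓ:ℝ) + 16*Real.log 2 := by ring
      have hexpand2 : 8*Real.log 2*((m:ℝ)+3) + 8*(q:ℝ)*pc*(3+|Real.log B|)
            + (8*(q:ℝ)*pc)*Real.log N
          = 8*Real.log 2*(m:ℝ) + 24*Real.log 2
            + (8*(q:ℝ)*pc*(3+|Real.log B|+Real.log N)) := by ring
      linarith [h9]
    linarith [h3t]
  -- total
  have hgoal : 300*L^pc*φ^p*(N:ℝ)^p = 216*D*(N:ℝ)^p + 84*D*(N:ℝ)^p := by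
    rw [hDdef]
    ring
  linarith [hterm1, hterm3, hmain, hminor]
end

section
/- Let X be a totally bounded metric space and γ > 0 be such that there exist constants c₁, c₂ > 0 and ε₀ > 0 with c₁·ε^{−γ} ≤ H_ε(X) ≤ c₂·ε^{−γ} for all ε ∈ (0, ε₀), where H_ε(X) is the metric entropy of X. Let β ∈ (0, 1], c > 0, B > 0, and let 𝓕 be the set of all functions F : X → ℝ that are Hölder continuous of order β with coefficient c (i.e., |F(x) − F(x')| ≤ c·d(x,x')^β for all x, x' ∈ X) and satisfy |F| ≤ B. Then there exist a constant C > 0, depending only on β, γ and the constants c₁, c₂ above, and a prediction strategy that guarantees, for every sequence of signals x₁, x₂, … ∈ X and observations y₁, y₂, … ∈ [−1, 1]: for all sufficiently large N and all F ∈ 𝓕, Σ_{n=1}^N (yₙ − μₙ)² ≤ Σ_{n=1}^N (yₙ − F(xₙ))² + C·c·N / (log₂ N)^{β/γ}. -/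
open scoped BigOperators

universe u

namespace S13

lemma exp_tangent_aux {u v : ℝ} (hu : |u| ≤ 1/2) (hv : 3*u^2 ≤ v) :
    Real.exp (u - v) ≤ 1 + u := by
  have h1 : Real.exp (u - v) ≤ Real.exp (u - 3*u^2) :=
    Real.exp_le_exp.2 (by linarith)
  have habs := abs_le.1 hu
  have hpos : (0:ℝ) < 1 + (3*u^2 - u) := by nlinarith [sq_nonneg u, sq_nonneg (u-1)]
  have h2 : Real.exp (u - 3*u^2) = (Real.exp (3*u^2 - u))⁻¹ := by
    rw [← Real.exp_neg]; ring_nf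
  have h3 : (1 + (3*u^2 - u)) ≤ Real.exp (3*u^2 - u) := by
    have := Real.add_one_le_exp (3*u^2 - u); linarith
  have h4 : (Real.exp (3*u^2 - u))⁻¹ ≤ (1 + (3*u^2 - u))⁻¹ := inv_anti₀ hpos h3
  have h5 : (1 + (3*u^2 - u))⁻¹ ≤ 1 + u := by
    rw [inv_le_iff_one_le_mul₀ hpos]
    nlinarith [sq_nonneg u]
  calc Real.exp (u-v) ≤ Real.exp (u - 3*u^2) := h1
    _ = (Real.exp (3*u^2 - u))⁻¹ := h2
    _ ≤ (1 + (3*u^2 - u))⁻¹ := h4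
    _ ≤ 1 + u := h5

lemma tangent {y μ t : ℝ} (hy : |y| ≤ 1) (hμ : |μ| ≤ 2) (ht : |t| ≤ 2) :
    Real.exp (-(1/128) * (y - t)^2) ≤
      Real.exp (-(1/128) * (y - μ)^2) * (1 + (1/64) * ((y - μ) * (t - μ))) := by
  set u : ℝ := (1/64) * ((y - μ) * (t - μ)) with hudef
  set v : ℝ := (1/128) * (t - μ)^2 with hvdef
  have habsy := abs_le.1 hy
  have habsμ := abs_le.1 hμ
  have habst := abs_le.1 ht
  have hu : |u| ≤ 1/2 := by
    rw [abs_le]; constructor <;> nlinarith [sq_nonneg (y-μ), sq_nonneg (t-μ), sq_nonneg (y-μ+(t-μ)), sq_nonneg (y-μ-(t-μ))]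
  have hv : 3*u^2 ≤ v := by
    have h9 : (y-μ)^2 ≤ 9 := by nlinarith
    have h0 : (0:ℝ) ≤ (t-μ)^2 := sq_nonneg _
    have h1 : (y-μ)^2 * (t-μ)^2 ≤ 9 * (t-μ)^2 := mul_le_mul_of_nonneg_right h9 h0
    rw [hudef, hvdef]
    nlinarith
  have key := exp_tangent_aux hu hv
  have hsplit : -(1/128) * (y - t)^2 = -(1/128) * (y - μ)^2 + (u - v) := by
    rw [hudef, hvdef]; ring
  rw [hsplit, Real.exp_add]
  exact mul_le_mul_of_nonneg_left key (le_of_lt (Real.exp_pos _))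

noncomputable def lossSum {X : Type*} (f : X → ℝ) (h : List (X × ℝ)) : ℝ :=
  (h.map (fun p => (p.2 - f p.1)^2)).sum

noncomputable def wt {X ι : Type*} (π : ι → ℝ) (g : ι → X → ℝ) (h : List (X × ℝ)) (e : ι) : ℝ :=
  π e * Real.exp (-(1/128) * lossSum (g e) h)

noncomputable def strat {X ι : Type*} (π : ι → ℝ) (g : ι → X → ℝ) : List (X × ℝ) → X → ℝ :=
  fun h x => (∑' e, wt π g h e * g e x) / (∑' e, wt π g h e)

lemma lossSum_hist {X : Type*} (f : X → ℝ) (x : ℕ → X) (y : ℕ → ℝ) (n : ℕ) :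
    lossSum f ((List.range n).map fun i => (x i, y i)) =
      ∑ i ∈ Finset.range n, (y i - f (x i))^2 := by
  induction n with
  | zero => simp [lossSum]
  | succ n ih =>
      rw [List.range_succ, Finset.sum_range_succ, ← ih]
      simp [lossSum]

theorem core {X : Type*} {ι : Type*} [Nonempty ι]
    (π : ι → ℝ) (hπpos : ∀ e, 0 < π e) (hπ : HasSum π 1)
    (g : ι → X → ℝ) (hg : ∀ e x', |g e x'| ≤ 2)
    (x : ℕ → X) (y : ℕ → ℝ) (hy : ∀ n, |y n| ≤ 1) (e : ι) (N : ℕ) :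
    ∑ n ∈ Finset.range N, (y n - preds (strat π g) x y n)^2 ≤
      ∑ n ∈ Finset.range N, (y n - g e (x n))^2 + 128 * Real.log (1 / π e) := by
  classical
  set α : ℝ := 1/128 with hα
  have hα0 : (0:ℝ) < α := by rw [hα]; norm_num
  set w : ℕ → ι → ℝ := fun n e => π e * Real.exp (-α * ∑ i ∈ Finset.range n, (y i - g e (x i))^2) with hw
  have hπs : Summable π := hπ.summable
  have hwpos : ∀ n e, 0 < w n e := fun n e => mul_pos (hπpos e) (Real.exp_pos _)
  have hwle : ∀ n e, w n e ≤ π e := by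
    intro n e
    have hS : (0:ℝ) ≤ ∑ i ∈ Finset.range n, (y i - g e (x i))^2 :=
      Finset.sum_nonneg fun i _ => sq_nonneg _
    have h1 : Real.exp (-α * ∑ i ∈ Finset.range n, (y i - g e (x i))^2) ≤ 1 := by
      rw [Real.exp_le_one_iff]
      have := mul_nonneg hα0.le hS
      linarith
    calc w n e = π e * _ := rfl
      _ ≤ π e * 1 := by exact mul_le_mul_of_nonneg_left h1 (hπpos e).le
      _ = π e := mul_one _
  have hws : ∀ n, Summable (w n) := fun n =>
    hπs.of_nonneg_of_le (fun e => (hwpos n e).le) (hwle n)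
  have hnums : ∀ n, Summable (fun e => w n e * g e (x n)) := by
    intro n
    rw [← summable_abs_iff]
    apply Summable.of_nonneg_of_le (fun e => abs_nonneg _) (fun e => ?_) ((hws n).mul_left 2)
    rw [abs_mul, abs_of_pos (hwpos n e)]
    calc w n e * |g e (x n)| ≤ w n e * 2 :=
          mul_le_mul_of_nonneg_left (hg e (x n)) (hwpos n e).le
      _ = 2 * w n e := mul_comm _ _
  set W : ℕ → ℝ := fun n => ∑' e, w n e with hWdef
  have hWn : ∀ n, W n = ∑' e', w n e' := fun n => rfl
  have hWpos : ∀ n, 0 < W n := fun n =>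
    Summable.tsum_pos (hws n) (fun e => (hwpos n e).le) (Classical.arbitrary ι) (hwpos n _)
  have hwt : ∀ n e', wt π g ((List.range n).map fun i => (x i, y i)) e' = w n e' := by
    intro n e'
    rw [wt, lossSum_hist]
  set μ : ℕ → ℝ := fun n => preds (strat π g) x y n with hμdef
  set num : ℕ → ℝ := fun n => ∑' e, w n e * g e (x n) with hnumdef
  have hnumn : ∀ n, num n = ∑' e', w n e' * g e' (x n) := fun n => rfl
  have hμeq : ∀ n, μ n = num n / W n := by
    intro n
    show preds (strat π g) x y n = num n / W n
    rw [preds, strat, hnumn, hWn]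
    congr 1
    · exact tsum_congr fun e' => by rw [hwt]
    · exact tsum_congr fun e' => by rw [hwt]
  have hnumabs : ∀ n, |num n| ≤ 2 * W n := by
    intro n
    have hup : num n ≤ 2 * W n := by
      rw [hnumn, hWn, ← tsum_mul_left]
      apply Summable.tsum_le_tsum _ (hnums n) ((hws n).mul_left 2)
      intro e'
      have h := abs_le.1 (hg e' (x n))
      nlinarith [(hwpos n e').le, h.1, h.2]
    have hlo : (-2) * W n ≤ num n := by
      rw [hnumn, hWn, ← tsum_mul_left]
      apply Summable.tsum_le_tsum _ ((hws n).mul_left (-2)) (hnums n)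
      intro e'
      have h := abs_le.1 (hg e' (x n))
      nlinarith [(hwpos n e').le, h.1, h.2]
    rw [abs_le]; constructor <;> linarith
  have hμabs : ∀ n, |μ n| ≤ 2 := by
    intro n
    rw [hμeq n, abs_div, abs_of_pos (hWpos n), div_le_iff₀ (hWpos n)]
    linarith [hnumabs n]
  have hnumW : ∀ n, num n = μ n * W n := by
    intro n
    rw [hμeq n, div_mul_cancel₀]
    exact (hWpos n).ne'
  have hstep : ∀ n, W (n+1) ≤ Real.exp (-α * (y n - μ n)^2) * W n := by
    intro n
    set A : ℝ := Real.exp (-α * (y n - μ n)^2) with hA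
    set b : ℝ := (1/64) * (y n - μ n) with hb
    have hw1 : ∀ e', w (n+1) e' = w n e' * Real.exp (-α * (y n - g e' (x n))^2) := by
      intro e'
      show π e' * _ = (π e' * _) * _
      have harg : -α * ∑ i ∈ Finset.range (n+1), (y i - g e' (x i))^2
          = (-α * ∑ i ∈ Finset.range n, (y i - g e' (x i))^2) + (-α * (y n - g e' (x n))^2) := by
        rw [Finset.sum_range_succ]; ring
      rw [harg, Real.exp_add, ← mul_assoc]
    have hpt : ∀ e', w (n+1) e' ≤
        (A * (1 - b * μ n)) * w n e' + (A * b) * (w n e' * g e' (x n)) := by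
      intro e'
      rw [hw1 e']
      have ht : Real.exp (-(1/128) * (y n - g e' (x n))^2) ≤
          Real.exp (-(1/128) * (y n - μ n)^2) *
            (1 + (1/64) * ((y n - μ n) * (g e' (x n) - μ n))) :=
        tangent (hy n) (hμabs n) (hg e' (x n))
      rw [hα] at *
      calc w n e' * Real.exp (-(1/128) * (y n - g e' (x n))^2)
          ≤ w n e' * (Real.exp (-(1/128) * (y n - μ n)^2) *
              (1 + (1/64) * ((y n - μ n) * (g e' (x n) - μ n)))) :=
            mul_le_mul_of_nonneg_left ht (hwpos n e').le
        _ = (A * (1 - b * μ n)) * w n e' + (A * b) * (w n e' * g e' (x n)) := by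
            rw [hA, hb]; ring
    have hsum1 : Summable (fun e' => (A * (1 - b * μ n)) * w n e') := (hws n).mul_left _
    have hsum2 : Summable (fun e' => (A * b) * (w n e' * g e' (x n))) := (hnums n).mul_left _
    calc W (n+1) = ∑' e', w (n+1) e' := hWn _
      _ ≤ ∑' e', ((A * (1 - b * μ n)) * w n e' + (A * b) * (w n e' * g e' (x n))) :=
          Summable.tsum_le_tsum hpt (hws (n+1)) (hsum1.add hsum2)
      _ = (A * (1 - b * μ n)) * W n + (A * b) * num n := by
          rw [Summable.tsum_add hsum1 hsum2, tsum_mul_left, tsum_mul_left, ← hWn, ← hnumn]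
      _ = A * W n := by rw [hnumW n]; ring
  have hmain : ∀ n, W n ≤ Real.exp (-α * ∑ i ∈ Finset.range n, (y i - μ i)^2) := by
    intro n
    induction n with
    | zero =>
        have hW0 : W 0 = 1 := by
          rw [hWn]
          rw [tsum_congr (fun e' => by simp [hw] : ∀ e', w 0 e' = π e'), hπ.tsum_eq]
        rw [hW0]
        simp
    | succ n ih =>
        calc W (n+1) ≤ Real.exp (-α * (y n - μ n)^2) * W n := hstep n
          _ ≤ Real.exp (-α * (y n - μ n)^2) *
              Real.exp (-α * ∑ i ∈ Finset.range n, (y i - μ i)^2) :=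
            mul_le_mul_of_nonneg_left ih (Real.exp_pos _).le
          _ = Real.exp (-α * ∑ i ∈ Finset.range (n+1), (y i - μ i)^2) := by
            rw [← Real.exp_add]
            congr 1
            rw [Finset.sum_range_succ]
            ring
  have hlow : π e * Real.exp (-α * ∑ i ∈ Finset.range N, (y i - g e (x i))^2) ≤ W N := by
    rw [hWn]
    exact Summable.le_tsum (hws N) e (fun j _ => (hwpos N j).le)
  have hfin := hlow.trans (hmain N)
  have hlog := Real.log_le_log (mul_pos (hπpos e) (Real.exp_pos _)) hfin
  rw [Real.log_mul (hπpos e).ne' (Real.exp_pos _).ne', Real.log_exp, Real.log_exp] at hlog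
  rw [hα] at hlog
  have hfinal : ∑ n ∈ Finset.range N, (y n - μ n)^2 ≤
      ∑ n ∈ Finset.range N, (y n - g e (x n))^2 + 128 * Real.log (1 / π e) := by
    rw [one_div, Real.log_inv]
    linarith
  exact hfinal

end S13



namespace S13
open Filter

lemma clamp_abs_le_one (t : ℝ) : |max (-1) (min 1 t)| ≤ 1 := by
  rw [abs_le]
  exact ⟨le_max_left _ _, max_le (by norm_num) (min_le_left _ _)⟩

lemma clamp_lip (a b : ℝ) : |max (-1) (min 1 a) - max (-1) (min 1 b)| ≤ |a - b| := by
  have h1 : |min 1 a - min 1 b| ≤ |a - b| := by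
    rw [min_comm 1 a, min_comm 1 b]
    simpa using abs_min_sub_min_le_max a 1 b 1
  calc |max (-1) (min 1 a) - max (-1) (min 1 b)|
      = |max (min 1 a) (-1) - max (min 1 b) (-1)| := by rw [max_comm (-1), max_comm (-1)]
    _ ≤ |min 1 a - min 1 b| := abs_max_sub_max_le_abs _ _ _
    _ ≤ |a - b| := h1

lemma clamp_loss_le (y v : ℝ) (hy : |y| ≤ 1) :
    (y - max (-1) (min 1 v))^2 ≤ (y - v)^2 := by
  have h := abs_le.1 hy
  rcases le_total v (-1) with h1 | h1
  · rw [min_eq_right (by linarith : v ≤ 1), max_eq_left h1]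
    nlinarith
  · rcases le_total 1 v with h2 | h2
    · rw [min_eq_left h2, max_eq_right (by norm_num : (-1:ℝ) ≤ 1)]
      nlinarith
    · rw [min_eq_right h2, max_eq_right h1]

lemma grid_approx (δ : ℝ) (hδ0 : 0 < δ) (hδ1 : δ ≤ 1) (t : ℝ) (ht : |t| ≤ 1) :
    ∃ j : ℕ, j < ⌈1/δ⌉₊ ∧ |(-1 + (2*(j:ℝ)+1)*δ) - t| ≤ δ := by
  have hG1 : 1 ≤ ⌈1/δ⌉₊ := Nat.one_le_ceil_iff.2 (by positivity)
  have hGle : (⌈1/δ⌉₊ : ℝ) ≤ 1/δ + 1 := (Nat.ceil_lt_add_one (by positivity)).le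
  have hGge : 1/δ ≤ (⌈1/δ⌉₊ : ℝ) := Nat.le_ceil _
  have hta := abs_le.1 ht
  set z : ℝ := (t+1)/(2*δ) with hz
  have hz0 : 0 ≤ z := div_nonneg (by linarith) (by positivity)
  have hzt : t + 1 = z * (2*δ) := by
    rw [hz]; field_simp
  by_cases hcase : ⌊z⌋₊ < ⌈1/δ⌉₊
  · refine ⟨⌊z⌋₊, hcase, ?_⟩
    have hf1 : (⌊z⌋₊ : ℝ) ≤ z := Nat.floor_le hz0
    have hf2 : z < (⌊z⌋₊ : ℝ) + 1 := Nat.lt_floor_add_one z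
    rw [abs_le]
    constructor <;> nlinarith
  · push_neg at hcase
    refine ⟨⌈1/δ⌉₊ - 1, Nat.sub_lt (by omega) one_pos, ?_⟩
    have hcast : ((⌈1/δ⌉₊ - 1 : ℕ) : ℝ) = (⌈1/δ⌉₊ : ℝ) - 1 := by
      rw [Nat.cast_sub hG1]; norm_num
    have hzG : (⌈1/δ⌉₊ : ℝ) ≤ z := le_trans (Nat.cast_le.2 hcase) (Nat.floor_le hz0)
    have ht1 : 1 ≤ t := by
      have h2 : 2 ≤ t + 1 := by
        have : (2:ℝ) ≤ (1/δ) * (2*δ) := by field_simp; norm_num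
        nlinarith
      linarith
    have ht1' : t = 1 := le_antisymm hta.2 ht1
    have hGδ : 1 ≤ (⌈1/δ⌉₊:ℝ) * δ := by
      have := mul_le_mul_of_nonneg_right hGge hδ0.le
      rw [one_div_mul_cancel hδ0.ne'] at this
      exact this
    rw [hcast, ht1', abs_le]
    constructor <;> nlinarith

lemma prior_hasSum {F : ℕ → Type*} [∀ k, Fintype (F k)] [∀ k, Nonempty (F k)] :
    HasSum (fun e : (Σ k, F k) => ((1:ℝ)/2)^(e.1+1) / (Fintype.card (F e.1))) 1 := by
  set f : (Σ k, F k) → ℝ := fun e => ((1:ℝ)/2)^(e.1+1) / (Fintype.card (F e.1)) with hf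
  have hcardpos : ∀ k, 0 < (Fintype.card (F k) : ℝ) := fun k => by
    exact_mod_cast Fintype.card_pos
  have hfpos : ∀ e, 0 ≤ f e := fun e => le_of_lt (by positivity)
  have hfiber : ∀ k, HasSum (fun v : F k => f ⟨k, v⟩) (((1:ℝ)/2)^(k+1)) := by
    intro k
    have := hasSum_fintype (fun v : F k => f ⟨k, v⟩)
    convert this using 1
    rw [hf]
    show _ = ∑ b : F k, ((1:ℝ)/2)^(k+1) / (Fintype.card (F k))
    simp only [Finset.sum_const, Finset.card_univ, nsmul_eq_mul]
    field_simp
  have hgeom : HasSum (fun k : ℕ => ((1:ℝ)/2)^(k+1)) 1 := by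
    have h2 := hasSum_geometric_two.mul_left (1/2 : ℝ)
    norm_num at h2
    convert h2 using 2 with k
    · rfl
    rw [pow_succ]
    ring
  have hsummable : Summable f := by
    rw [summable_sigma_of_nonneg hfpos]
    exact ⟨fun k => (hfiber k).summable, by
      refine Summable.congr hgeom.summable fun k => ?_
      exact ((hfiber k).tsum_eq).symm⟩
  rw [hsummable.hasSum_iff]
  rw [Summable.tsum_sigma hsummable]
  calc ∑' k, ∑' v : F k, f ⟨k, v⟩ = ∑' k, ((1:ℝ)/2)^(k+1) :=
        tsum_congr fun k => (hfiber k).tsum_eq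
    _ = 1 := hgeom.tsum_eq

end S13



namespace S13
open Filter Real

lemma eventuals (s c : ℝ) (hs : 0 < s) (hc : 0 < c) (R : ℝ) :
    ∀ᶠ k : ℕ in atTop,
      (R < ((k:ℝ)+1)/2) ∧
      (((k:ℝ)+1)/2 ≤ (k:ℝ) - (2*s+3) * Real.logb 2 ((k:ℝ)+2)) ∧
      (128*((k:ℝ)+1) ≤ c/2 * 2^k * ((k:ℝ)+1)^(-s)) ∧
      (128 * (((k:ℝ)+2)^(-(2*s+3))) * ((((k:ℝ)+1)^s)/c + 2) ≤ c/2 * ((k:ℝ)+1)^(-s)) := by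
  have hcast : Tendsto (fun k : ℕ => (k:ℝ)) atTop atTop := tendsto_natCast_atTop_atTop
  have hk2 : Tendsto (fun k : ℕ => (k:ℝ)+2) atTop atTop :=
    tendsto_atTop_add_const_right _ 2 hcast
  -- E1
  have hE1 : ∀ᶠ k : ℕ in atTop, R < ((k:ℝ)+1)/2 := by
    refine eventually_atTop.2 ⟨⌈2*R⌉₊, fun k hk => ?_⟩
    have h1 : (2*R : ℝ) ≤ (⌈2*R⌉₊ : ℝ) := Nat.le_ceil _
    have h2 : ((⌈2*R⌉₊ : ℕ) : ℝ) ≤ (k:ℝ) := Nat.cast_le.2 hk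
    linarith
  -- E2
  have hlog2pos : (0:ℝ) < Real.log 2 := Real.log_pos (by norm_num)
  have hd : (0:ℝ) < (2*s+3)/Real.log 2 := by positivity
  have hlittle : ∀ᶠ x : ℝ in atTop, ((2*s+3)/Real.log 2) * Real.log x ≤ (1/8) * x := by
    have h := Asymptotics.isLittleO_iff.1 Real.isLittleO_log_id_atTop
      (show (0:ℝ) < (1/8) / ((2*s+3)/Real.log 2) by positivity)
    filter_upwards [h, eventually_ge_atTop (1:ℝ)] with x hx hx1
    rw [Real.norm_eq_abs, Real.norm_eq_abs, id] at hx
    rw [abs_of_nonneg (Real.log_nonneg hx1), abs_of_nonneg (by linarith : (0:ℝ) ≤ x)] at hx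
    have := mul_le_mul_of_nonneg_left hx hd.le
    calc ((2*s+3)/Real.log 2) * Real.log x ≤ ((2*s+3)/Real.log 2) * ((1/8) / ((2*s+3)/Real.log 2) * x) := this
      _ = (1/8) * x := by field_simp
  have hE2 : ∀ᶠ k : ℕ in atTop,
      ((k:ℝ)+1)/2 ≤ (k:ℝ) - (2*s+3) * Real.logb 2 ((k:ℝ)+2) := by
    filter_upwards [hk2.eventually hlittle, eventually_ge_atTop 2] with k hk hk2'
    have hkr : (2:ℝ) ≤ (k:ℝ) := by exact_mod_cast hk2'
    have hlogb : (2*s+3) * Real.logb 2 ((k:ℝ)+2)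
        = ((2*s+3)/Real.log 2) * Real.log ((k:ℝ)+2) := by
      rw [Real.logb]; ring
    rw [hlogb]
    linarith
  -- E3
  have hE3 : ∀ᶠ k : ℕ in atTop, 128*((k:ℝ)+1) ≤ c/2 * 2^k * ((k:ℝ)+1)^(-s) := by
    have t := tendsto_pow_const_div_const_pow_of_one_lt (⌈s⌉₊+1) (show (1:ℝ) < 2 by norm_num)
    have t2 := t.comp (Filter.tendsto_add_atTop_nat 1)
    have ev := t2.eventually (gt_mem_nhds (show (0:ℝ) < c/512 by positivity))
    filter_upwards [ev] with k hk
    simp only [Function.comp] at hk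
    have hk0 : (0:ℝ) ≤ (k:ℝ) := Nat.cast_nonneg k
    have hb1 : (1:ℝ) ≤ (k:ℝ)+1 := by linarith
    have hpow : ((k:ℝ)+1)^((1:ℝ)+s) ≤ ((k:ℝ)+1)^((⌈s⌉₊+1 : ℕ):ℝ) := by
      apply Real.rpow_le_rpow_of_exponent_le hb1
      push_cast
      have := Nat.le_ceil s
      linarith
    have hcast2 : ((k+1:ℕ):ℝ) = (k:ℝ)+1 := by push_cast; ring
    rw [Real.rpow_natCast] at hpow
    rw [hcast2] at hk
    have h2k : ((2:ℝ))^(k+1) = 2 * 2^k := by ring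
    rw [h2k, div_lt_iff₀ (by positivity)] at hk
    have hsplit : ((k:ℝ)+1)^((1:ℝ)+s) = ((k:ℝ)+1) * ((k:ℝ)+1)^s := by
      rw [Real.rpow_add (by linarith : (0:ℝ) < (k:ℝ)+1), Real.rpow_one]
    have hrs : (0:ℝ) < ((k:ℝ)+1)^s := Real.rpow_pos_of_pos (by linarith) _
    have key : 128*((k:ℝ)+1) * ((k:ℝ)+1)^s ≤ c/2 * 2^k := by
      calc 128*((k:ℝ)+1) * ((k:ℝ)+1)^s = 128 * (((k:ℝ)+1)^((1:ℝ)+s)) := by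
            rw [hsplit]; ring
        _ ≤ 128 * (((k:ℝ)+1)^(⌈s⌉₊+1)) := by
            exact mul_le_mul_of_nonneg_left hpow (by norm_num)
        _ ≤ 128 * (c/512 * (2*2^k)) := mul_le_mul_of_nonneg_left hk.le (by norm_num)
        _ = c/2 * 2^k := by ring
    have hfin : 128*((k:ℝ)+1) ≤ (c/2 * 2^k) / ((k:ℝ)+1)^s := (le_div_iff₀ hrs).2 key
    rw [div_eq_mul_inv] at hfin
    rw [Real.rpow_neg (by linarith : (0:ℝ) ≤ (k:ℝ)+1)]
    linarith
  -- E4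
  have hE4 : ∀ᶠ k : ℕ in atTop,
      128 * (((k:ℝ)+2)^(-(2*s+3))) * ((((k:ℝ)+1)^s)/c + 2) ≤ c/2 * ((k:ℝ)+1)^(-s) := by
    have t4 : Tendsto (fun k:ℕ => ((k:ℝ)+2)⁻¹) atTop (nhds 0) :=
      tendsto_inv_atTop_zero.comp hk2
    have ev := t4.eventually (gt_mem_nhds (show (0:ℝ) < (c/2)/(128*(1/c+2)) by positivity))
    filter_upwards [ev] with k hk
    have hk0 : (0:ℝ) ≤ (k:ℝ) := Nat.cast_nonneg k
    have h1pos : (0:ℝ) < (k:ℝ)+1 := by linarith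
    have h2pos : (0:ℝ) < (k:ℝ)+2 := by linarith
    have h2ge1 : (1:ℝ) ≤ (k:ℝ)+2 := by linarith
    have hs1 : ((k:ℝ)+1)^s ≤ ((k:ℝ)+2)^s := Real.rpow_le_rpow (by linarith) (by linarith) hs.le
    have hsge1 : (1:ℝ) ≤ ((k:ℝ)+2)^s := by
      calc (1:ℝ) = ((k:ℝ)+2)^(0:ℝ) := (Real.rpow_zero _).symm
        _ ≤ ((k:ℝ)+2)^s := Real.rpow_le_rpow_of_exponent_le h2ge1 hs.le
    have hinv : (0:ℝ) < c⁻¹ := inv_pos.2 hc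
    have hmul1 : ((k:ℝ)+1)^s * c⁻¹ ≤ ((k:ℝ)+2)^s * c⁻¹ := mul_le_mul_of_nonneg_right hs1 hinv.le
    have hfactor : (((k:ℝ)+1)^s)/c + 2 ≤ ((k:ℝ)+2)^s * (1/c + 2) := by
      rw [div_eq_mul_inv, one_div]
      nlinarith [hsge1]
    have hmono : ((k:ℝ)+2)^(-s) ≤ ((k:ℝ)+1)^(-s) := by
      rw [Real.rpow_neg h2pos.le, Real.rpow_neg h1pos.le]
      exact inv_anti₀ (Real.rpow_pos_of_pos h1pos _) hs1
    have hm3 : ((k:ℝ)+2)^(-(3:ℝ)) ≤ ((k:ℝ)+2)⁻¹ := by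
      rw [← Real.rpow_neg_one]
      exact Real.rpow_le_rpow_of_exponent_le h2ge1 (by norm_num)
    have hsplit : ((k:ℝ)+2)^(-(2*s+3)) * ((k:ℝ)+2)^s = ((k:ℝ)+2)^(-s) * ((k:ℝ)+2)^(-(3:ℝ)) := by
      rw [← Real.rpow_add h2pos, ← Real.rpow_add h2pos]
      congr 1
      ring
    have hposneg : (0:ℝ) < ((k:ℝ)+2)^(-(2*s+3)) := Real.rpow_pos_of_pos h2pos _
    have hpos1s : (0:ℝ) < ((k:ℝ)+1)^(-s) := Real.rpow_pos_of_pos h1pos _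
    have hpos2s : (0:ℝ) < ((k:ℝ)+2)^(-s) := Real.rpow_pos_of_pos h2pos _
    have hpos23 : (0:ℝ) < ((k:ℝ)+2)^(-(3:ℝ)) := Real.rpow_pos_of_pos h2pos _
    calc 128 * (((k:ℝ)+2)^(-(2*s+3))) * ((((k:ℝ)+1)^s)/c + 2)
        ≤ 128 * (((k:ℝ)+2)^(-(2*s+3))) * (((k:ℝ)+2)^s * (1/c+2)) := by
          apply mul_le_mul_of_nonneg_left hfactor
          positivity
      _ = 128*(1/c+2) * (((k:ℝ)+2)^(-(2*s+3)) * ((k:ℝ)+2)^s) := by ring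
      _ = 128*(1/c+2) * (((k:ℝ)+2)^(-s) * ((k:ℝ)+2)^(-(3:ℝ))) := by rw [hsplit]
      _ ≤ 128*(1/c+2) * (((k:ℝ)+1)^(-s) * ((k:ℝ)+2)⁻¹) := by
          apply mul_le_mul_of_nonneg_left ?_ (by positivity)
          exact mul_le_mul hmono hm3 hpos23.le hpos1s.le
      _ = (128*(1/c+2) * ((k:ℝ)+2)⁻¹) * ((k:ℝ)+1)^(-s) := by ring
      _ ≤ c/2 * ((k:ℝ)+1)^(-s) := by
          apply mul_le_mul_of_nonneg_right ?_ hpos1s.le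
          have h128 : (0:ℝ) < 128*(1/c+2) := by positivity
          calc 128*(1/c+2) * ((k:ℝ)+2)⁻¹ ≤ 128*(1/c+2) * ((c/2)/(128*(1/c+2))) :=
                mul_le_mul_of_nonneg_left hk.le h128.le
            _ = c/2 := by field_simp
  filter_upwards [hE1, hE2, hE3, hE4] with k h1 h2 h3 h4
  exact ⟨h1, h2, h3, h4⟩



end S13


set_option maxHeartbeats 1000000 in
/-- Corollary 9 ("very big classes"): if the signal space `X` itself has metric entropy
of order `ε^{-γ}`, then against bounded Hölder functions of order `β` with coefficient
`c` the regret is `O(c N / log^{β/γ} N)`, with the constant depending only on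
`β, γ, c₁, c₂`. -/
theorem stmt13 (β : ℝ) (hβ : β ∈ Set.Ioc (0 : ℝ) 1) (γ : ℝ) (hγ : 0 < γ)
    (c₁ c₂ : ℝ) (hc₁ : 0 < c₁) (hc₂ : 0 < c₂) :
    ∃ C : ℝ, 0 < C ∧
      ∀ (X : Type u) [MetricSpace X],
        TotallyBounded (Set.univ : Set X) →
        ∀ ε₀ : ℝ, 0 < ε₀ →
        (∀ ε ∈ Set.Ioo (0 : ℝ) ε₀,
          c₁ * ε ^ (-γ) ≤ metricEntropy (Set.univ : Set X) ε ∧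
          metricEntropy (Set.univ : Set X) ε ≤ c₂ * ε ^ (-γ)) →
        ∀ c B : ℝ, 0 < c → 0 < B →
        ∃ σ : List (X × ℝ) → X → ℝ,
          ∀ x : ℕ → X, ∀ y : ℕ → ℝ, (∀ n, y n ∈ Set.Icc (-1 : ℝ) 1) →
            ∃ N₀ : ℕ, ∀ N ≥ N₀, ∀ F : X → ℝ,
              (∀ a b : X, |F a - F b| ≤ c * dist a b ^ β) →
              (∀ a : X, |F a| ≤ B) →
              ∑ n ∈ Finset.range N, (y n - preds σ x y n) ^ 2 ≤
                ∑ n ∈ Finset.range N, (y n - F (x n)) ^ 2 +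
                  C * c * N / Real.logb 2 N ^ (β / γ) := by
  classical
  obtain ⟨hβ0, hβ1⟩ := hβ
  set s : ℝ := β / γ with hsdef
  have hs : 0 < s := div_pos hβ0 hγ
  refine ⟨5*(1+(2*c₂)^s) + 1, by positivity, ?_⟩
  intro X _inst hTB ε₀ hε₀ hent c B hc _hB
  -- X is nonempty
  have hXne : Nonempty X := by
    by_contra hempty
    rw [not_nonempty_iff] at hempty
    have hmem : (ε₀/2) ∈ Set.Ioo (0:ℝ) ε₀ := ⟨by linarith, by linarith⟩
    have h1 := (hent _ hmem).1
    have h0 : (0:ℕ) ∈ {n : ℕ | ∃ S : Finset X, ↑S ⊆ (Set.univ : Set X) ∧ S.card = n ∧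
        ∀ a ∈ (Set.univ : Set X), ∃ b ∈ S, dist a b ≤ ε₀/2} :=
      ⟨∅, by simp, by simp, fun a _ => (hempty.false a).elim⟩
    have hCN : coveringNumber (Set.univ : Set X) (ε₀/2) = 0 :=
      Nat.sInf_eq_zero.2 (Or.inl h0)
    rw [metricEntropy, hCN] at h1
    norm_num [Real.logb] at h1
    have hp := Real.rpow_pos_of_pos (show (0:ℝ) < ε₀/2 by linarith) (-γ)
    nlinarith
  -- minimal nets exist
  have netEx : ∀ ε : ℝ, 0 < ε → ∃ S : Finset X,
      S.card = coveringNumber (Set.univ : Set X) ε ∧ ∀ a : X, ∃ b ∈ S, dist a b ≤ ε := by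
    intro ε hε
    have hne : {n : ℕ | ∃ S : Finset X, ↑S ⊆ (Set.univ:Set X) ∧ S.card = n ∧
        ∀ a ∈ (Set.univ:Set X), ∃ b ∈ S, dist a b ≤ ε}.Nonempty := by
      obtain ⟨t, htfin, htcover⟩ := (Metric.totallyBounded_iff).1 hTB ε hε
      refine ⟨htfin.toFinset.card, htfin.toFinset, by simp, rfl, fun a _ => ?_⟩
      have h2 := htcover (Set.mem_univ a)
      simp only [Set.mem_iUnion] at h2
      obtain ⟨b, hb, hab⟩ := h2
      exact ⟨b, htfin.mem_toFinset.2 hb, (Metric.mem_ball.1 hab).le⟩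
    obtain ⟨S, _, hcard, hcover⟩ := Nat.sInf_mem hne
    exact ⟨S, by rw [coveringNumber]; exact hcard, fun a => hcover a (Set.mem_univ a)⟩
  -- covering number bound
  have hCNle : ∀ ε : ℝ, ε ∈ Set.Ioo (0:ℝ) ε₀ →
      ((coveringNumber (Set.univ : Set X) ε : ℕ) : ℝ) ≤ (2:ℝ)^(c₂ * ε^(-γ)) := by
    intro ε hε
    have h2 := (hent ε hε).2
    rw [metricEntropy] at h2
    have hCN1 : 1 ≤ coveringNumber (Set.univ : Set X) ε := by
      obtain ⟨S, hcard, hcover⟩ := netEx ε hε.1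
      obtain ⟨b, hb, _⟩ := hcover (Classical.arbitrary X)
      rw [← hcard]
      exact Finset.card_pos.2 ⟨b, hb⟩
    have hCNpos : (0:ℝ) < ((coveringNumber (Set.univ : Set X) ε : ℕ) : ℝ) := by
      exact_mod_cast hCN1
    exact (Real.logb_le_iff_le_rpow (by norm_num) hCNpos).1 h2
  -- parameters
  set δf : ℕ → ℝ := fun k => min (c * ((k:ℝ)+1)^(-s)) 1 with hδf
  have hδpos : ∀ k, 0 < δf k := fun k =>
    lt_min (mul_pos hc (Real.rpow_pos_of_pos (by positivity) _)) one_pos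
  have hδ1 : ∀ k, δf k ≤ 1 := fun k => min_le_right _ _
  set Gf : ℕ → ℕ := fun k => ⌈1/δf k⌉₊ with hGf
  have hG1 : ∀ k, 1 ≤ Gf k := fun k => Nat.one_le_ceil_iff.2 (by positivity)
  set af : ℕ → ℝ := fun k => max ((k:ℝ) - (2*s+3) * Real.logb 2 ((k:ℝ)+2)) 1 with haf
  have ha1 : ∀ k, 1 ≤ af k := fun k => le_max_right _ _
  have hapos : ∀ k, 0 < af k := fun k => lt_of_lt_of_le one_pos (ha1 k)
  set εf : ℕ → ℝ := fun k => (c₂ / af k)^(1/γ) with hεf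
  have hεpos : ∀ k, 0 < εf k := fun k => Real.rpow_pos_of_pos (div_pos hc₂ (hapos k)) _
  -- nets
  have netEx' : ∀ k : ℕ, ∃ S : Finset X,
      S.card = coveringNumber (Set.univ:Set X) (εf k) ∧ ∀ a : X, ∃ b ∈ S, dist a b ≤ εf k :=
    fun k => netEx _ (hεpos k)
  choose Sf hScard hSnet using netEx'
  have projEx : ∀ (k:ℕ) (x' : X), ∃ b : {z // z ∈ Sf k}, dist x' (b:X) ≤ εf k := by
    intro k x'
    obtain ⟨b, hb, hd⟩ := hSnet k x'
    exact ⟨⟨b, hb⟩, hd⟩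
  choose proj hproj using projEx
  -- experts
  set gr : ℕ → ℕ → ℝ := fun k j => -1 + (2*(j:ℝ)+1) * δf k with hgr
  have hgrb : ∀ k (j:ℕ), j < Gf k → |gr k j| ≤ 2 := by
    intro k j hj
    have h1 : (0:ℝ) < δf k := hδpos k
    have hGle : (Gf k : ℝ) ≤ 1/δf k + 1 := (Nat.ceil_lt_add_one (by positivity)).le
    have hjle : (j:ℝ) + 1 ≤ (Gf k:ℝ) := by exact_mod_cast hj
    have hδδ : 1/δf k * δf k = 1 := by field_simp
    have hj0 : (0:ℝ) ≤ (j:ℝ) := Nat.cast_nonneg j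
    have hjδ : (j:ℝ) * δf k ≤ 1 := by
      have hj1 : (j:ℝ) ≤ 1/δf k := by linarith
      calc (j:ℝ) * δf k ≤ 1/δf k * δf k := mul_le_mul_of_nonneg_right hj1 h1.le
        _ = 1 := hδδ
    have hgrv : gr k j = -1 + (2*(j:ℝ)+1) * δf k := rfl
    rw [hgrv, abs_le]
    have hpos : (0:ℝ) ≤ (2*(j:ℝ)+1) * δf k := by positivity
    constructor
    · linarith
    · nlinarith [hδ1 k]
  set gg : ((k : ℕ) × ({z // z ∈ Sf k} → Fin (Gf k))) → X → ℝ :=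
    fun e x' => gr e.1 ((e.2 (proj e.1 x')).val) with hgg
  have hgg2 : ∀ e x', |gg e x'| ≤ 2 :=
    fun e x' => hgrb e.1 _ ((e.2 (proj e.1 x')).isLt)
  -- prior
  haveI hFinNe : ∀ k, Nonempty (Fin (Gf k)) := fun k => ⟨⟨0, hG1 k⟩⟩
  haveI hFibNe : ∀ k, Nonempty ({z // z ∈ Sf k} → Fin (Gf k)) :=
    fun k => ⟨fun _ => (hFinNe k).some⟩
  haveI hSigNe : Nonempty ((k : ℕ) × ({z // z ∈ Sf k} → Fin (Gf k))) :=
    ⟨⟨0, (hFibNe 0).some⟩⟩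
  set Kf : ℕ → ℕ := fun k => Fintype.card ({z // z ∈ Sf k} → Fin (Gf k)) with hKf
  have hKpos : ∀ k, 0 < Kf k := fun k => Fintype.card_pos
  set pr : ((k : ℕ) × ({z // z ∈ Sf k} → Fin (Gf k))) → ℝ :=
    fun e => ((1:ℝ)/2)^(e.1+1) / (Kf e.1) with hpr
  have hprpos : ∀ e, 0 < pr e := fun e =>
    div_pos (by positivity) (by exact_mod_cast hKpos e.1)
  have hprsum : HasSum pr 1 := S13.prior_hasSum
  -- the strategy
  refine ⟨S13.strat pr gg, ?_⟩
  intro x y hy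
  have hy' : ∀ n, |y n| ≤ 1 := fun n => abs_le.2 ⟨(hy n).1, (hy n).2⟩
  obtain ⟨k₀, hk₀⟩ := Filter.eventually_atTop.1 (S13.eventuals s c hs hc (c₂ / ε₀^γ))
  refine ⟨max (2^(k₀+1)) 2, ?_⟩
  intro N hN F hF hFB
  set k := Nat.log2 N with hkdef
  have hN2 : 2 ≤ N := le_trans (le_max_right _ _) hN
  have hN0 : N ≠ 0 := by omega
  have hNk0 : 2^(k₀+1) ≤ N := le_trans (le_max_left _ _) hN
  have hkk₀ : k₀ ≤ k := by
    have := (Nat.le_log2 hN0).2 hNk0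
    omega
  have h2kN : 2^k ≤ N := Nat.log2_self_le hN0
  have hNlt : N < 2^(k+1) := Nat.lt_log2_self
  obtain ⟨hEv1, hEv2, hEv3, hEv4⟩ := hk₀ k hkk₀
  -- value of af k
  have hk0r : (0:ℝ) ≤ (k:ℝ) := Nat.cast_nonneg k
  have hk1 : 1 ≤ k := (Nat.le_log2 hN0).2 (by omega)
  have hk1r : (1:ℝ) ≤ (k:ℝ) := by exact_mod_cast hk1
  have hafval : af k = (k:ℝ) - (2*s+3) * Real.logb 2 ((k:ℝ)+2) := by
    have harg : (1:ℝ) ≤ (k:ℝ) - (2*s+3) * Real.logb 2 ((k:ℝ)+2) := by linarith [hEv2]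
    exact max_eq_left harg
  have hak : ((k:ℝ)+1)/2 ≤ af k := by rw [hafval]; exact hEv2
  -- εf k < ε₀
  have hεγpos : (0:ℝ) < ε₀^γ := Real.rpow_pos_of_pos hε₀ _
  have hεlt : εf k < ε₀ := by
    have h2 : c₂ / ε₀^γ < af k := lt_of_lt_of_le hEv1 hak
    have h1 : c₂ / af k < ε₀^γ := by
      rw [div_lt_iff₀ (hapos k)]
      rw [div_lt_iff₀ hεγpos] at h2
      linarith
    calc εf k = (c₂/af k)^(1/γ) := rfl
      _ < (ε₀^γ)^(1/γ) :=
          Real.rpow_lt_rpow (div_nonneg hc₂.le (hapos k).le) h1 (by positivity)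
      _ = ε₀ := by
          rw [← Real.rpow_mul hε₀.le, mul_one_div_cancel hγ.ne', Real.rpow_one]
  -- exponent identity
  have hεγ : c₂ * (εf k)^(-γ) = af k := by
    have hbase : (0:ℝ) ≤ c₂ / af k := div_nonneg hc₂.le (hapos k).le
    calc c₂ * (εf k)^(-γ) = c₂ * ((c₂/af k)^(1/γ))^(-γ) := rfl
      _ = c₂ * (c₂/af k)^((1/γ)*(-γ)) := by rw [← Real.rpow_mul hbase]
      _ = c₂ * (c₂/af k)^(-(1:ℝ)) := by
          congr 1
          field_simp
      _ = c₂ * (af k / c₂) := by rw [Real.rpow_neg_one, inv_div]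
      _ = af k := by field_simp
  -- M bound
  set M : ℕ := (Sf k).card with hMdef
  have hMle : (M:ℝ) ≤ (2:ℝ)^k * ((k:ℝ)+2)^(-(2*s+3)) := by
    have h1 : (M:ℝ) ≤ (2:ℝ)^(c₂ * (εf k)^(-γ)) := by
      rw [hMdef, hScard k]
      exact hCNle (εf k) ⟨hεpos k, hεlt⟩
    rw [hεγ, hafval] at h1
    have h2 : (2:ℝ)^((k:ℝ) - (2*s+3) * Real.logb 2 ((k:ℝ)+2))
        = (2:ℝ)^k * ((k:ℝ)+2)^(-(2*s+3)) := by
      rw [Real.rpow_sub (by norm_num : (0:ℝ) < 2)]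
      have h3 : (2:ℝ)^((2*s+3) * Real.logb 2 ((k:ℝ)+2)) = ((k:ℝ)+2)^(2*s+3) := by
        rw [mul_comm (2*s+3), Real.rpow_mul (by norm_num : (0:ℝ) ≤ 2),
          Real.rpow_logb (by norm_num) (by norm_num) (by positivity)]
      rw [h3, Real.rpow_natCast, div_eq_mul_inv, ← Real.rpow_neg (by positivity)]
    rw [h2] at h1
    exact h1
  -- log G bound
  have hGpos : (0:ℝ) < (Gf k:ℝ) := by exact_mod_cast hG1 k
  have hrsp : (0:ℝ) < ((k:ℝ)+1)^s := Real.rpow_pos_of_pos (by positivity) _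
  have hGle2 : (Gf k : ℝ) ≤ ((k:ℝ)+1)^s / c + 2 := by
    have h1 : (Gf k:ℝ) ≤ 1/δf k + 1 := (Nat.ceil_lt_add_one (by positivity)).le
    have h2 : 1/δf k ≤ ((k:ℝ)+1)^s/c + 1 := by
      rcases min_cases (c * ((k:ℝ)+1)^(-s)) 1 with ⟨heq, _⟩ | ⟨heq, _⟩
      · have h3 : δf k = c * ((k:ℝ)+1)^(-s) := by rw [hδf]; exact heq
        have h4 : 1/δf k = ((k:ℝ)+1)^s / c := by
          rw [h3, Real.rpow_neg (by positivity)]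
          rw [one_div, mul_inv, inv_inv]
          ring
        rw [h4]
        linarith
      · have h3 : δf k = 1 := by rw [hδf]; exact heq
        rw [h3]
        have : (0:ℝ) ≤ ((k:ℝ)+1)^s/c := by positivity
        norm_num
        linarith
    linarith
  have hlogG : Real.log (Gf k) ≤ ((k:ℝ)+1)^s / c + 2 := by
    have := Real.log_le_sub_one_of_pos hGpos
    linarith
  -- clamp of F
  set Ft : X → ℝ := fun x' => max (-1) (min 1 (F x')) with hFt
  have hFtabs : ∀ x', |Ft x'| ≤ 1 := fun x' => S13.clamp_abs_le_one (F x')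
  have hclamp : ∀ n, (y n - Ft (x n))^2 ≤ (y n - F (x n))^2 :=
    fun n => S13.clamp_loss_le (y n) (F (x n)) (hy' n)
  -- choose the approximating expert
  have hvex : ∀ p : {z // z ∈ Sf k}, ∃ j : ℕ, j < Gf k ∧ |gr k j - Ft (p:X)| ≤ δf k := by
    intro p
    obtain ⟨j, hj1, hj2⟩ := S13.grid_approx (δf k) (hδpos k) (hδ1 k) (Ft p) (hFtabs _)
    exact ⟨j, hj1, hj2⟩
  choose vj hvjlt hvj using hvex
  set e : ((k' : ℕ) × ({z // z ∈ Sf k'} → Fin (Gf k'))) := ⟨k, fun p => ⟨vj p, hvjlt p⟩⟩ with he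
  have hcore := S13.core pr hprpos hprsum gg hgg2 x y hy' e N
  -- approximation bound
  set D : ℝ := δf k + c * (εf k)^β with hD
  have hD0 : 0 ≤ D :=
    add_nonneg (hδpos k).le (mul_nonneg hc.le (Real.rpow_nonneg (hεpos k).le β))
  have happrox : ∀ x', |gg e x' - Ft x'| ≤ D := by
    intro x'
    have h1 : |gr k (vj (proj k x')) - Ft ((proj k x' : X))| ≤ δf k := hvj _
    have h2 : |Ft ((proj k x':X)) - Ft x'| ≤ c * dist x' ((proj k x':X)) ^ β := by
      calc |Ft ((proj k x':X)) - Ft x'| ≤ |F ((proj k x':X)) - F x'| :=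
            S13.clamp_lip _ _
        _ ≤ c * dist ((proj k x':X)) x' ^ β := hF _ _
        _ = c * dist x' ((proj k x':X)) ^ β := by rw [dist_comm]
    have h3 : c * dist x' ((proj k x':X)) ^ β ≤ c * (εf k)^β := by
      apply mul_le_mul_of_nonneg_left ?_ hc.le
      exact Real.rpow_le_rpow dist_nonneg (hproj k x') hβ0.le
    have h4 : gg e x' = gr k (vj (proj k x')) := rfl
    calc |gg e x' - Ft x'|
        ≤ |gg e x' - Ft ((proj k x':X))| + |Ft ((proj k x':X)) - Ft x'| := abs_sub_le _ _ _
      _ ≤ δf k + c * (εf k)^β := by rw [h4]; linarith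
  -- per-round comparison
  have hper : ∀ n, (y n - gg e (x n))^2 ≤ (y n - Ft (x n))^2 + 5*D := by
    intro n
    have h1 := abs_le.1 (happrox (x n))
    have h2 := abs_le.1 (hgg2 e (x n))
    have h3 := abs_le.1 (hFtabs (x n))
    have h4 := abs_le.1 (hy' n)
    have hm : (Ft (x n) - gg e (x n)) * (2*(y n) - gg e (x n) - Ft (x n)) ≤ D * 5 := by
      calc (Ft (x n) - gg e (x n)) * (2*(y n) - gg e (x n) - Ft (x n))
          ≤ |(Ft (x n) - gg e (x n)) * (2*(y n) - gg e (x n) - Ft (x n))| := le_abs_self _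
        _ = |Ft (x n) - gg e (x n)| * |2*(y n) - gg e (x n) - Ft (x n)| := abs_mul _ _
        _ ≤ D * 5 := by
            rw [abs_sub_comm]
            refine mul_le_mul (happrox (x n)) ?_ (abs_nonneg _) hD0
            rw [abs_le]
            constructor <;> linarith
    have hid : (y n - gg e (x n))^2 = (y n - Ft (x n))^2 +
        (Ft (x n) - gg e (x n)) * (2*(y n) - gg e (x n) - Ft (x n)) := by ring
    linarith [hm]
  -- sum comparison
  have hsum1 : ∑ n ∈ Finset.range N, (y n - gg e (x n))^2 ≤
      ∑ n ∈ Finset.range N, (y n - F (x n))^2 + N * (5*D) := by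
    calc ∑ n ∈ Finset.range N, (y n - gg e (x n))^2
        ≤ ∑ n ∈ Finset.range N, ((y n - Ft (x n))^2 + 5*D) :=
          Finset.sum_le_sum (fun n _ => hper n)
      _ = ∑ n ∈ Finset.range N, (y n - Ft (x n))^2 + N*(5*D) := by
          rw [Finset.sum_add_distrib, Finset.sum_const, Finset.card_range, nsmul_eq_mul]
      _ ≤ ∑ n ∈ Finset.range N, (y n - F (x n))^2 + N*(5*D) := by
          have := Finset.sum_le_sum (fun n (_ : n ∈ Finset.range N) => hclamp n)
          linarith
  -- prior log bound
  have hKpos' : (0:ℝ) < (Kf k : ℝ) := by exact_mod_cast hKpos k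
  have hKval : (Kf k : ℝ) = (Gf k : ℝ)^M := by
    have h0 : Kf k = (Gf k)^M := by
      show Fintype.card ({z // z ∈ Sf k} → Fin (Gf k)) = (Gf k)^M
      rw [Fintype.card_fun, Fintype.card_fin, Fintype.card_coe]
    rw [h0]
    push_cast
    ring
  have hlogpr : Real.log (1 / pr e) ≤ ((k:ℝ)+1) + (M:ℝ) * (((k:ℝ)+1)^s / c + 2) := by
    have hpre : pr e = ((1:ℝ)/2)^(k+1) / (Kf k) := rfl
    have h1 : 1 / pr e = 2^(k+1) * (Kf k : ℝ) := by
      rw [hpre, one_div_div]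
      rw [div_eq_mul_inv, one_div, inv_pow, inv_inv]
      ring
    rw [h1, Real.log_mul (by positivity) hKpos'.ne']
    have hlog2k : Real.log ((2:ℝ)^(k+1)) = ((k+1:ℕ):ℝ) * Real.log 2 := Real.log_pow _ _
    have hlogK : Real.log (Kf k : ℝ) = (M:ℝ) * Real.log (Gf k) := by
      rw [hKval, Real.log_pow]
    have hlog2le : Real.log 2 ≤ 1 := by
      have := Real.log_two_lt_d9
      linarith
    have hlogGpos : 0 ≤ Real.log (Gf k) := Real.log_nonneg (by exact_mod_cast hG1 k)
    have h5 : (M:ℝ) * Real.log (Gf k) ≤ (M:ℝ) * (((k:ℝ)+1)^s/c + 2) :=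
      mul_le_mul_of_nonneg_left hlogG (Nat.cast_nonneg M)
    have h6 : ((k+1:ℕ):ℝ) * Real.log 2 ≤ (k:ℝ)+1 := by
      push_cast
      nlinarith [Real.log_nonneg (by norm_num : (1:ℝ) ≤ 2)]
    rw [hlog2k, hlogK]
    linarith
  -- regret term bound
  have hp2k : (0:ℝ) ≤ (2:ℝ)^k := by positivity
  have hregret : 128 * Real.log (1 / pr e) ≤ c * (2:ℝ)^k * ((k:ℝ)+1)^(-s) := by
    have h2 : 128*(M:ℝ)*(((k:ℝ)+1)^s/c + 2) ≤ c/2 * (2:ℝ)^k * ((k:ℝ)+1)^(-s) := by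
      have hfac : (0:ℝ) ≤ ((k:ℝ)+1)^s/c + 2 := by positivity
      have h3 : (M:ℝ)*(((k:ℝ)+1)^s/c + 2) ≤
          ((2:ℝ)^k * ((k:ℝ)+2)^(-(2*s+3))) * (((k:ℝ)+1)^s/c + 2) :=
        mul_le_mul_of_nonneg_right hMle hfac
      have h4 := mul_le_mul_of_nonneg_left hEv4 hp2k
      calc 128*(M:ℝ)*(((k:ℝ)+1)^s/c + 2)
          ≤ 128 * (((2:ℝ)^k * ((k:ℝ)+2)^(-(2*s+3))) * (((k:ℝ)+1)^s/c + 2)) := by linarith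
        _ = (2:ℝ)^k * (128 * (((k:ℝ)+2)^(-(2*s+3))) * ((((k:ℝ)+1)^s)/c + 2)) := by ring
        _ ≤ (2:ℝ)^k * (c/2 * ((k:ℝ)+1)^(-s)) := h4
        _ = c/2 * (2:ℝ)^k * ((k:ℝ)+1)^(-s) := by ring
    have h5 : 128 * Real.log (1/pr e) ≤ 128*((k:ℝ)+1) + 128*(M:ℝ)*(((k:ℝ)+1)^s/c+2) := by
      nlinarith [hlogpr]
    have h6 := hEv3
    have h7 : c/2 * (2:ℝ)^k * ((k:ℝ)+1)^(-s) + c/2 * (2:ℝ)^k * ((k:ℝ)+1)^(-s)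
        = c * (2:ℝ)^k * ((k:ℝ)+1)^(-s) := by ring
    linarith
  -- logb N bounds
  have hNr2 : (2:ℝ) ≤ (N:ℝ) := by exact_mod_cast hN2
  have hNpos : (0:ℝ) < (N:ℝ) := by linarith
  have hlogbN_ge : 1 ≤ Real.logb 2 N := by
    have h1 : Real.logb 2 2 ≤ Real.logb 2 N :=
      Real.logb_le_logb_of_le (by norm_num) (by norm_num) hNr2
    rwa [Real.logb_self_eq_one (by norm_num)] at h1
  have hlogbN_pos : (0:ℝ) < Real.logb 2 N := by linarith
  have hlogbN_le : Real.logb 2 N ≤ (k:ℝ)+1 := by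
    have h1 : (N:ℝ) ≤ (2:ℝ)^((k:ℝ)+1) := by
      have h2 : (N:ℝ) ≤ ((2^(k+1) : ℕ) : ℝ) := by exact_mod_cast hNlt.le
      rw [show ((k:ℝ)+1) = ((k+1:ℕ):ℝ) by push_cast; ring, Real.rpow_natCast]
      exact_mod_cast h2
    have h3 : Real.logb 2 N ≤ Real.logb 2 ((2:ℝ)^((k:ℝ)+1)) :=
      Real.logb_le_logb_of_le (by norm_num) hNpos h1
    rwa [Real.logb_rpow (by norm_num) (by norm_num)] at h3
  have hflip : ((k:ℝ)+1)^(-s) ≤ (Real.logb 2 N)^(-s) := by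
    rw [Real.rpow_neg (by positivity), Real.rpow_neg hlogbN_pos.le]
    exact inv_anti₀ (Real.rpow_pos_of_pos hlogbN_pos _)
      (Real.rpow_le_rpow hlogbN_pos.le hlogbN_le hs.le)
  have h2kNr : ((2:ℝ)^k) ≤ (N:ℝ) := by exact_mod_cast h2kN
  -- D bound
  have hδterm : δf k ≤ c * ((k:ℝ)+1)^(-s) := min_le_left _ _
  have hεterm : c * (εf k)^β ≤ c * (2*c₂)^s * ((k:ℝ)+1)^(-s) := by
    have hbase : (0:ℝ) ≤ c₂ / af k := div_nonneg hc₂.le (hapos k).le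
    have hb : (εf k)^β = (c₂/af k)^s := by
      calc (εf k)^β = ((c₂/af k)^(1/γ))^β := rfl
        _ = (c₂/af k)^((1/γ)*β) := by rw [← Real.rpow_mul hbase]
        _ = (c₂/af k)^s := by
            congr 1
            rw [hsdef]
            field_simp
    have h2 : c₂/af k ≤ 2*c₂/((k:ℝ)+1) := by
      rw [div_le_div_iff₀ (hapos k) (by positivity)]
      nlinarith [hak, hc₂]
    have h3 : (c₂/af k)^s ≤ (2*c₂/((k:ℝ)+1))^s :=
      Real.rpow_le_rpow hbase h2 hs.le
    have h4 : (2*c₂/((k:ℝ)+1))^s = (2*c₂)^s * ((k:ℝ)+1)^(-s) := by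
      rw [div_eq_mul_inv, Real.mul_rpow (by positivity) (by positivity),
        Real.inv_rpow (by positivity), ← Real.rpow_neg (by positivity)]
    rw [hb]
    calc c * (c₂/af k)^s ≤ c * ((2*c₂)^s * ((k:ℝ)+1)^(-s)) := by
          rw [← h4]
          exact mul_le_mul_of_nonneg_left h3 hc.le
      _ = c * (2*c₂)^s * ((k:ℝ)+1)^(-s) := by ring
  have hDle : D ≤ c * (1 + (2*c₂)^s) * ((k:ℝ)+1)^(-s) := by
    rw [hD]
    have := hδterm
    have := hεterm
    have h1 : c * (1 + (2*c₂)^s) * ((k:ℝ)+1)^(-s)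
        = c * ((k:ℝ)+1)^(-s) + c * (2*c₂)^s * ((k:ℝ)+1)^(-s) := by ring
    linarith
  -- final chain
  have hmain : ∑ n ∈ Finset.range N, (y n - preds (S13.strat pr gg) x y n)^2 ≤
      ∑ n ∈ Finset.range N, (y n - F (x n))^2 +
        (5*(1+(2*c₂)^s) + 1) * c * N * (Real.logb 2 N)^(-s) := by
    have hks : (0:ℝ) ≤ ((k:ℝ)+1)^(-s) := (Real.rpow_pos_of_pos (by positivity) _).le
    have h5D : (N:ℝ) * (5*D) ≤ 5*(1+(2*c₂)^s) * c * N * ((k:ℝ)+1)^(-s) := by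
      have h1 : 5*D ≤ 5 * (c * (1 + (2*c₂)^s) * ((k:ℝ)+1)^(-s)) := by linarith
      have h2 := mul_le_mul_of_nonneg_left h1 hNpos.le
      calc (N:ℝ) * (5*D) ≤ (N:ℝ) * (5 * (c * (1 + (2*c₂)^s) * ((k:ℝ)+1)^(-s))) := h2
        _ = 5*(1+(2*c₂)^s) * c * N * ((k:ℝ)+1)^(-s) := by ring
    have hreg2 : 128 * Real.log (1/pr e) ≤ c * N * ((k:ℝ)+1)^(-s) := by
      have h1 : c * (2:ℝ)^k * ((k:ℝ)+1)^(-s) ≤ c * N * ((k:ℝ)+1)^(-s) := by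
        apply mul_le_mul_of_nonneg_right ?_ hks
        exact mul_le_mul_of_nonneg_left h2kNr hc.le
      linarith [hregret]
    have hcoef : (0:ℝ) ≤ (5*(1+(2*c₂)^s) + 1) * c * N := by positivity
    have hflip2 : (5*(1+(2*c₂)^s) + 1) * c * N * ((k:ℝ)+1)^(-s)
        ≤ (5*(1+(2*c₂)^s) + 1) * c * N * (Real.logb 2 N)^(-s) :=
      mul_le_mul_of_nonneg_left hflip hcoef
    calc ∑ n ∈ Finset.range N, (y n - preds (S13.strat pr gg) x y n)^2
        ≤ ∑ n ∈ Finset.range N, (y n - gg e (x n))^2 + 128 * Real.log (1 / pr e) := hcore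
      _ ≤ ∑ n ∈ Finset.range N, (y n - F (x n))^2 + N * (5*D) + 128 * Real.log (1/pr e) :=
          add_le_add_left hsum1 _
      _ ≤ ∑ n ∈ Finset.range N, (y n - F (x n))^2 +
            5*(1+(2*c₂)^s) * c * N * ((k:ℝ)+1)^(-s) + c * N * ((k:ℝ)+1)^(-s) :=
          add_le_add (add_le_add_right h5D _) hreg2
      _ = ∑ n ∈ Finset.range N, (y n - F (x n))^2 +
            (5*(1+(2*c₂)^s) + 1) * c * N * ((k:ℝ)+1)^(-s) := by ring
      _ ≤ ∑ n ∈ Finset.range N, (y n - F (x n))^2 +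
            (5*(1+(2*c₂)^s) + 1) * c * N * (Real.logb 2 N)^(-s) :=
          add_le_add_right hflip2 _
  have heq : (5*(1+(2*c₂)^s) + 1) * c * (N:ℝ) * (Real.logb 2 N)^(-s)
      = (5*(1+(2*c₂)^s) + 1) * c * N / (Real.logb 2 N)^s := by
    rw [Real.rpow_neg hlogbN_pos.le, div_eq_mul_inv]
  rw [heq] at hmain
  exact hmain
end
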